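/- arXiv:2412.07661 — 7 statements merged into one kernel-verified Lean document; each statement's English description precedes it below -/
import Mathlib

section
/- If 1 ≤ p ≤ ∞, α > 1/p' (p' the conjugate exponent), f : ℝ → ℂ is measurable and f(x)|x|^α ∈ L^p, then |1 - e^{2πi x}|^k · f(x) is integrable for every integer k ≥ α, with ‖f(x)(1-e^{2πi x})^k‖_{L¹} ≤ C ‖f(x)|x|^α‖_{L^p}. -/
/-!
Since `|1 - e^{2πix}| ≤ 2π min(1, |x|)` and `k ≥ α`, the factor `|1 - e^{2πix}|^k` is at most
a constant times `min(1, |x|)^α ≤ 2^α (1 + |x|)^{-α} |x|^α`. Hence `|f(x) (1 - e^{2πix})^k|` is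
dominated by `(1 + |x|)^{-α} · |f(x) |x|^α|`, and Hölder's inequality applies because
`(1 + |x|)^{-α} ∈ L^{p'}` exactly when `α p' > 1`.
-/

open MeasureTheory Real
open scoped ENNReal

lemma norm_one_sub_exp_two_pi_I_mul_le (x : ℝ) :
    ‖1 - Complex.exp (2 * π * Complex.I * x)‖ ≤ 2 * π * min 1 |x| := by
  have harg : 2 * π * Complex.I * x = ((2 * π * x : ℝ) : ℂ) * Complex.I := by push_cast; ring
  rw [mul_min_of_nonneg _ _ (by positivity), mul_one]
  refine le_min ?_ ?_
  · calc ‖1 - Complex.exp (2 * π * Complex.I * x)‖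
        ≤ ‖(1 : ℂ)‖ + ‖Complex.exp (((2 * π * x : ℝ) : ℂ) * Complex.I)‖ := by
          rw [harg]; exact norm_sub_le _ _
      _ = 2 := by rw [norm_one, Complex.norm_exp_ofReal_mul_I]; norm_num
      _ ≤ 2 * π := by linarith [Real.pi_gt_three]
  · rw [norm_sub_rev, harg, mul_comm _ Complex.I]
    calc _ ≤ ‖2 * π * x‖ := Real.norm_exp_I_mul_ofReal_sub_one_le
      _ = 2 * π * |x| := by rw [Real.norm_eq_abs, abs_mul, abs_of_pos (by positivity)]

lemma min_one_abs_rpow_le {α : ℝ} (hα : 0 ≤ α) (x : ℝ) :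
    min 1 |x| ^ α ≤ 2 ^ α * (1 + |x|) ^ (-α) * |x| ^ α := by
  have hx : 0 < 1 + |x| := by positivity
  have hmin : min 1 |x| ≤ 2 * |x| / (1 + |x|) := by
    rw [le_div_iff₀ hx]
    rcases le_total |x| 1 with h | h
    · rw [min_eq_right h]; nlinarith [abs_nonneg x]
    · rw [min_eq_left h]; linarith
  calc min 1 |x| ^ α ≤ (2 * |x| / (1 + |x|)) ^ α := by gcongr
    _ = 2 ^ α * (1 + |x|) ^ (-α) * |x| ^ α := by
      rw [div_eq_mul_inv, Real.mul_rpow (by positivity) (by positivity),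
        Real.mul_rpow (by positivity) (by positivity), Real.inv_rpow hx.le,
        Real.rpow_neg hx.le]
      ring

lemma norm_one_sub_exp_two_pi_I_mul_pow_le {α : ℝ} (hα : 0 ≤ α) {k : ℕ} (hk : α ≤ k) (x : ℝ) :
    ‖(1 - Complex.exp (2 * π * Complex.I * x)) ^ k‖
      ≤ (2 * π) ^ k * 2 ^ α * (1 + |x|) ^ (-α) * |x| ^ α := by
  have hmin_pow : min 1 |x| ^ k ≤ min 1 |x| ^ α := by
    rw [← Real.rpow_natCast]
    exact Real.rpow_le_rpow_of_exponent_ge' (by positivity) (min_le_left _ _) hα hk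
  calc ‖(1 - Complex.exp (2 * π * Complex.I * x)) ^ k‖ ≤ (2 * π * min 1 |x|) ^ k := by
        rw [norm_pow]; gcongr; exact norm_one_sub_exp_two_pi_I_mul_le x
    _ = (2 * π) ^ k * min 1 |x| ^ k := mul_pow _ _ _
    _ ≤ (2 * π) ^ k * (2 ^ α * (1 + |x|) ^ (-α) * |x| ^ α) := by
        gcongr; exact hmin_pow.trans (min_one_abs_rpow_le hα x)
    _ = (2 * π) ^ k * 2 ^ α * (1 + |x|) ^ (-α) * |x| ^ α := by ring

lemma memLp_one_add_abs_rpow_neg (q : ℝ≥0∞) {α : ℝ} (hα : (1 / q).toReal < α) :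
    MemLp (fun x : ℝ => (1 + |x|) ^ (-α)) q volume := by
  have hmeas : AEStronglyMeasurable (fun x : ℝ => (1 + |x|) ^ (-α)) volume :=
    (by fun_prop : Measurable fun x : ℝ => (1 + |x|) ^ (-α)).aestronglyMeasurable
  rcases eq_or_ne q 0 with rfl | hq0
  · exact memLp_zero_iff_aestronglyMeasurable.mpr hmeas
  rcases eq_or_ne q ⊤ with rfl | hqtop
  · refine memLp_top_of_bound hmeas 1 (ae_of_all _ fun x => ?_)
    simp only [one_div, ENNReal.inv_top, ENNReal.toReal_zero] at hα
    rw [Real.norm_of_nonneg (by positivity)]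
    exact Real.rpow_le_one_of_one_le_of_nonpos (by simp) (by linarith)
  have hαq : 1 < α * q.toReal := by
    rw [one_div, ENNReal.toReal_inv] at hα
    have hq := ENNReal.toReal_pos hq0 hqtop
    rw [inv_lt_iff_one_lt_mul₀ hq] at hα
    linarith [mul_comm α q.toReal]
  refine (integrable_norm_rpow_iff hmeas hq0 hqtop).mp ?_
  have hpow : (fun x : ℝ => ‖(1 + |x|) ^ (-α)‖ ^ q.toReal)
      = fun x : ℝ => (1 + ‖x‖) ^ (-(α * q.toReal)) := by
    funext x
    rw [Real.norm_of_nonneg (by positivity), ← Real.rpow_mul (by positivity), neg_mul,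
      Real.norm_eq_abs]
  rw [hpow]
  exact integrable_one_add_norm (by simpa using hαq)

lemma eLpNorm_le_eLpNorm_mul_eLpNorm_of_norm_le_mul {Ω E F : Type*} [MeasurableSpace Ω]
    {μ : Measure Ω} [NormedAddCommGroup E] [NormedSpace ℝ E] [NormedAddCommGroup F]
    {p q r : ℝ≥0∞} [ENNReal.HolderTriple p q r] {w : Ω → ℝ} {g : Ω → E} {h : Ω → F}
    (hw : AEStronglyMeasurable w μ) (hg : AEStronglyMeasurable g μ)
    (hbound : ∀ᵐ x ∂μ, ‖h x‖ ≤ ‖w x‖ * ‖g x‖) :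
    eLpNorm h r μ ≤ eLpNorm w p μ * eLpNorm g q μ := by
  refine (eLpNorm_mono_ae (g := w • g) ?_).trans (eLpNorm_smul_le_mul_eLpNorm hg hw)
  filter_upwards [hbound] with x hx
  rwa [Pi.smul_apply', norm_smul]

/-- if α > 1/p' and f(x)|x|^α ∈ L^p, then (1-e^{2πix})^k f is integrable
for every integer k ≥ α, with L¹ norm controlled by the L^p norm. -/
theorem stmt2 (p p' : ℝ≥0∞) (hconj : 1/p + 1/p' = 1) (α : ℝ) (hα : (1/p').toReal < α)
    (k : ℕ) (hk : α ≤ k) :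
    ∃ C : ℝ, 0 < C ∧ ∀ f : ℝ → ℂ, AEStronglyMeasurable f volume →
      eLpNorm (fun x : ℝ => f x * ((|x| ^ α : ℝ) : ℂ)) p volume < ⊤ →
      Integrable (fun x : ℝ => f x * (1 - Complex.exp (2 * Real.pi * Complex.I * x)) ^ k) ∧
      eLpNorm (fun x : ℝ => f x * (1 - Complex.exp (2 * Real.pi * Complex.I * x)) ^ k) 1 volume ≤
        ENNReal.ofReal C * eLpNorm (fun x : ℝ => f x * ((|x| ^ α : ℝ) : ℂ)) p volume := by
  have : ENNReal.HolderTriple p' p 1 :=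
    ⟨by rw [inv_one, add_comm]; simpa only [one_div] using hconj⟩
  have hα0 : 0 ≤ α := ENNReal.toReal_nonneg.trans hα.le
  set w : ℝ → ℝ := fun x => (2 * π) ^ k * 2 ^ α * (1 + |x|) ^ (-α)
  have hw : MemLp w p' volume := (memLp_one_add_abs_rpow_neg p' hα).const_mul _
  refine ⟨(eLpNorm w p' volume).toReal + 1, by positivity, fun f hf hfin => ?_⟩
  have hbound : ∀ x : ℝ, ‖f x * (1 - Complex.exp (2 * π * Complex.I * x)) ^ k‖
      ≤ ‖w x‖ * ‖f x * ((|x| ^ α : ℝ) : ℂ)‖ := fun x => by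
    rw [Real.norm_of_nonneg (by positivity : 0 ≤ w x), norm_mul, norm_mul (f x),
      Complex.norm_real, Real.norm_of_nonneg (by positivity : 0 ≤ |x| ^ α)]
    calc _ ≤ ‖f x‖ * ((2 * π) ^ k * 2 ^ α * (1 + |x|) ^ (-α) * |x| ^ α) := by
          gcongr; exact norm_one_sub_exp_two_pi_I_mul_pow_le hα0 hk x
      _ = _ := by ring
  have hg : AEStronglyMeasurable (fun x : ℝ => f x * ((|x| ^ α : ℝ) : ℂ)) volume :=
    hf.mul (by fun_prop)
  have hHolder := eLpNorm_le_eLpNorm_mul_eLpNorm_of_norm_le_mul (p := p') (q := p) (r := 1)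
    hw.1 hg (ae_of_all _ hbound)
  have hC : eLpNorm w p' volume ≤ ENNReal.ofReal ((eLpNorm w p' volume).toReal + 1) :=
    ENNReal.le_ofReal_iff_toReal_le hw.2.ne (by positivity) |>.mpr (by linarith)
  exact ⟨memLp_one_iff_integrable.mp ⟨hf.mul (by fun_prop), hHolder.trans_lt
      (ENNReal.mul_lt_top hw.2 hfin)⟩, hHolder.trans (by gcongr)⟩
end

section
/- Let 1 ≤ p < ∞, φ a Schwartz function, α ∈ ℝ, (Δ_k)_{k=0}^N a sequence with Δ_k ≥ 1, and (c_k)_{k=0}^N complex numbers. Set F(x) = Σ_{k=0}^N c_k Δ_k φ((x-k)Δ_k). Then ‖F(x)(1+|x|)^α‖_{L^p} ≤ C (Σ_{k=0}^N |c_k|^p (k+1)^{pα} Δ_k^{p-1})^{1/p}, with C depending only on φ, p, α. -/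
open MeasureTheory Real Filter FourierTransform Topology
open scoped ENNReal NNReal SchwartzMap

/-!
Write `F(x) = ∑ₖ bₖ gₖ(x)` with `bₖ = cₖ Δₖ` and `gₖ(x) = φ((x - k) Δₖ)`. Since `φ` decays like
`(1 + |y|)⁻²`, `Δₖ ≥ 1`, and at most two integers `k` satisfy `⌊|x - k|⌋ = j`, we get
`∑ₖ |gₖ(x)| ≤ A` uniformly in `x`, `N` and `Δ`, so the weighted Hölder inequality gives
`|F(x)|ᵖ ≤ A^(p-1) ∑ₖ |bₖ|ᵖ |gₖ(x)|`. After multiplying by `(1 + |x|)^(pα)`, each term is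
integrated separately: Peetre's inequality moves the weight to `(1 + k)^(pα)` at the price of a
factor `(1 + |x - k|)^|pα|`, which is absorbed by `φ`, and the substitution `u = (x - k) Δₖ`
produces the factor `Δₖ⁻¹` that turns `Δₖᵖ` into `Δₖ^(p-1)`.
-/

lemma rpow_sum_mul_le_mul_sum_mul_rpow {ι : Type*} (s : Finset ι) {p : ℝ} (hp : 1 ≤ p)
    {w f : ι → ℝ} (hw : ∀ i, 0 ≤ w i) (hf : ∀ i, 0 ≤ f i) {A : ℝ} (hA : ∑ i ∈ s, w i ≤ A) :
    (∑ i ∈ s, w i * f i) ^ p ≤ A ^ (p - 1) * ∑ i ∈ s, w i * f i ^ p := by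
  have hp0 : 0 < p := by linarith
  have hW : 0 ≤ ∑ i ∈ s, w i := Finset.sum_nonneg fun i _ => hw i
  have hT : 0 ≤ ∑ i ∈ s, w i * f i ^ p :=
    Finset.sum_nonneg fun i _ => mul_nonneg (hw i) (rpow_nonneg (hf i) p)
  calc (∑ i ∈ s, w i * f i) ^ p
      ≤ ((∑ i ∈ s, w i) ^ (1 - p⁻¹) * (∑ i ∈ s, w i * f i ^ p) ^ p⁻¹) ^ p := by
        gcongr
        · exact Finset.sum_nonneg fun i _ => mul_nonneg (hw i) (hf i)
        · exact inner_le_weight_mul_Lp_of_nonneg s hp w f hw hf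
    _ = (∑ i ∈ s, w i) ^ (p - 1) * ∑ i ∈ s, w i * f i ^ p := by
        rw [mul_rpow (by positivity) (by positivity), ← rpow_mul hW, ← rpow_mul hT,
          inv_mul_cancel₀ hp0.ne', rpow_one, sub_mul, one_mul, inv_mul_cancel₀ hp0.ne']
    _ ≤ A ^ (p - 1) * ∑ i ∈ s, w i * f i ^ p := by
        gcongr

lemma norm_sum_mul_rpow_le {ι R : Type*} [SeminormedRing R] (s : Finset ι) {p : ℝ} (hp : 1 ≤ p)
    (b g : ι → R) {A : ℝ} (hA : ∑ i ∈ s, ‖g i‖ ≤ A) :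
    ‖∑ i ∈ s, b i * g i‖ ^ p ≤ A ^ (p - 1) * ∑ i ∈ s, ‖b i‖ ^ p * ‖g i‖ := by
  calc ‖∑ i ∈ s, b i * g i‖ ^ p ≤ (∑ i ∈ s, ‖g i‖ * ‖b i‖) ^ p := by
        gcongr
        exact (norm_sum_le _ _).trans
          (Finset.sum_le_sum fun i _ => (norm_mul_le _ _).trans_eq (mul_comm _ _))
    _ ≤ A ^ (p - 1) * ∑ i ∈ s, ‖g i‖ * ‖b i‖ ^ p :=
        rpow_sum_mul_le_mul_sum_mul_rpow s hp (fun i => norm_nonneg _) (fun i => norm_nonneg _) hA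
    _ = A ^ (p - 1) * ∑ i ∈ s, ‖b i‖ ^ p * ‖g i‖ := by
        simp_rw [mul_comm ‖g _‖]

lemma norm_sum_mul_ofReal_mul_ofReal_rpow_le {ι : Type*} (s : Finset ι) {p : ℝ} (hp : 1 ≤ p)
    (b : ι → ℂ) (g : ι → ℝ) {t A : ℝ} (ht : 0 ≤ t) (hA : ∑ i ∈ s, ‖g i‖ ≤ A) :
    ‖(∑ i ∈ s, b i * (g i : ℂ)) * (t : ℂ)‖ ^ p ≤
      A ^ (p - 1) * ((∑ i ∈ s, ‖b i‖ ^ p * ‖g i‖) * t ^ p) := by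
  have hF := norm_sum_mul_rpow_le s hp b (fun i => (g i : ℂ)) (A := A)
    (by simpa only [Complex.norm_real] using hA)
  simp only [Complex.norm_real] at hF
  rw [norm_mul, Complex.norm_real, norm_of_nonneg ht, mul_rpow (norm_nonneg _) ht, ← mul_assoc]
  gcongr

lemma norm_mul_ofReal_rpow_mul_inv (z : ℂ) {d : ℝ} (hd : 0 < d) (p w : ℝ) :
    ‖z * (d : ℂ)‖ ^ p * (w * d⁻¹) = ‖z‖ ^ p * w * d ^ (p - 1) := by
  rw [norm_mul, Complex.norm_real, norm_of_nonneg hd.le, mul_rpow (norm_nonneg _) hd.le,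
    rpow_sub_one hd.ne']
  ring

lemma one_add_norm_rpow_le_mul_rpow_abs {E : Type*} [SeminormedAddCommGroup E] (x y : E)
    (s : ℝ) :
    (1 + ‖x‖) ^ s ≤ (1 + ‖y‖) ^ s * (1 + ‖x - y‖) ^ |s| := by
  have key : ∀ (u v : E) (t : ℝ), 0 ≤ t →
      (1 + ‖u‖) ^ t ≤ (1 + ‖v‖) ^ t * (1 + ‖u - v‖) ^ t := by
    intro u v t ht
    rw [← mul_rpow (by positivity) (by positivity)]
    refine rpow_le_rpow (by positivity) ?_ ht
    nlinarith [norm_le_norm_add_norm_sub' u v, norm_nonneg v, norm_nonneg (u - v)]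
  rcases le_total 0 s with hs | hs
  · rw [abs_of_nonneg hs]
    exact key x y s hs
  · have h := key y x (-s) (neg_nonneg.2 hs)
    rw [norm_sub_rev, abs_of_nonpos hs]
    rw [rpow_neg (by positivity), rpow_neg (by positivity)] at h
    calc (1 + ‖x‖) ^ s = (1 + ‖y‖) ^ s * (((1 + ‖y‖) ^ s)⁻¹ * (1 + ‖x‖) ^ s) := by
          field_simp
      _ ≤ (1 + ‖y‖) ^ s * (((1 + ‖x‖) ^ s)⁻¹ * (1 + ‖y - x‖) ^ (-s) * (1 + ‖x‖) ^ s) := by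
          gcongr
      _ = (1 + ‖y‖) ^ s * (1 + ‖y - x‖) ^ (-s) := by
          field_simp

open Finset in
lemma card_filter_natFloor_abs_sub_eq_le_two (s : Finset ℕ) (x : ℝ) (j : ℕ) :
    #(s.filter fun k : ℕ => ⌊|x - k|⌋₊ = j) ≤ 2 := by
  have hmaps : Set.MapsTo (fun k : ℕ => (k : ℤ)) (s.filter fun k : ℕ => ⌊|x - k|⌋₊ = j)
      ({⌊x⌋ - j, ⌈x⌉ + j} : Finset ℤ) := by
    intro k hk
    rw [mem_coe, mem_filter] at hk
    have hlo : (j : ℝ) ≤ |x - k| := hk.2 ▸ Nat.floor_le (abs_nonneg _)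
    have hhi : |x - k| < j + 1 := hk.2 ▸ Nat.lt_floor_add_one _
    simp only [coe_insert, coe_singleton, Set.mem_insert_iff, Set.mem_singleton_iff]
    rcases le_total (k : ℝ) x with hkx | hxk
    · rw [abs_of_nonneg (sub_nonneg.2 hkx)] at hlo hhi
      have : ⌊x⌋ = k + j := Int.floor_eq_iff.2 ⟨by push_cast; linarith, by push_cast; linarith⟩
      omega
    · rw [abs_of_nonpos (sub_nonpos.2 hxk)] at hlo hhi
      have : ⌈x⌉ = k - j := Int.ceil_eq_iff.2 ⟨by push_cast; linarith, by push_cast; linarith⟩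
      omega
  exact (card_le_card_of_injOn _ hmaps Nat.cast_injective.injOn).trans card_le_two

open Finset in
lemma sum_comp_abs_sub_natCast_le_two_mul_tsum {f : ℝ → ℝ} (hf : AntitoneOn f (Set.Ici 0))
    (hf0 : ∀ n : ℕ, 0 ≤ f n) (hsum : Summable fun n : ℕ => f n) (s : Finset ℕ) (x : ℝ) :
    ∑ k ∈ s, f |x - k| ≤ 2 * ∑' n : ℕ, f n := by
  set g : ℕ → ℕ := fun k => ⌊|x - k|⌋₊
  calc ∑ k ∈ s, f |x - k| ≤ ∑ k ∈ s, f (g k) :=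
        sum_le_sum fun k _ => hf (Set.mem_Ici.2 (Nat.cast_nonneg _)) (Set.mem_Ici.2 (abs_nonneg _))
          (Nat.floor_le (abs_nonneg _))
    _ = ∑ j ∈ s.image g, #{k ∈ s | g k = j} • f j := sum_comp (fun n : ℕ => f n) g
    _ ≤ ∑ j ∈ s.image g, 2 * f j := by
        gcongr with j
        rw [nsmul_eq_mul]
        gcongr
        · exact hf0 j
        · exact_mod_cast card_filter_natFloor_abs_sub_eq_le_two s x j
    _ ≤ 2 * ∑' n : ℕ, f n := by
        rw [← mul_sum]
        gcongr
        exact hsum.sum_le_tsum _ fun n _ => hf0 n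

lemma summable_one_add_natCast_rpow_neg_two : Summable fun n : ℕ => (1 + (n : ℝ)) ^ (-2 : ℝ) :=
  ((summable_one_div_nat_add_rpow 1 2).2 one_lt_two).congr fun n => by
    rw [abs_of_nonneg (by positivity), add_comm, rpow_neg (by positivity), one_div]

namespace SchwartzMap

variable {E F : Type*} [NormedAddCommGroup E] [NormedSpace ℝ E] [NormedAddCommGroup F]
  [NormedSpace ℝ F]

lemma exists_one_add_norm_rpow_mul_norm_le (φ : 𝓢(E, F)) (r s : ℝ) :
    ∃ D, 0 ≤ D ∧ ∀ y, (1 + ‖y‖) ^ r * ‖φ y‖ ≤ D * (1 + ‖y‖) ^ (-s) := by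
  set n := ⌈r + s⌉₊
  set D := 2 ^ n * (Finset.Iic (n, 0)).sup (fun m => SchwartzMap.seminorm ℝ m.1 m.2) φ
  have hD : ∀ y, (1 + ‖y‖) ^ n * ‖φ y‖ ≤ D := fun y => by
    simpa using one_add_le_sup_seminorm_apply (𝕜 := ℝ) (m := (n, 0)) le_rfl le_rfl φ y
  refine ⟨D, (by positivity : (0:ℝ) ≤ (1 + ‖(0:E)‖) ^ n * ‖φ 0‖).trans (hD 0), fun y => ?_⟩
  have hy : 1 ≤ 1 + ‖y‖ := le_add_of_nonneg_right (norm_nonneg y)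
  calc (1 + ‖y‖) ^ r * ‖φ y‖ = (1 + ‖y‖) ^ (r - n) * ((1 + ‖y‖) ^ n * ‖φ y‖) := by
        rw [← mul_assoc, ← rpow_natCast, ← rpow_add (by positivity), sub_add_cancel]
    _ ≤ (1 + ‖y‖) ^ (-s) * D := by
        gcongr
        · linarith [Nat.le_ceil (r + s)]
        · exact hD y
    _ = D * (1 + ‖y‖) ^ (-s) := mul_comm _ _

lemma integrable_one_add_norm_rpow_mul_norm [MeasurableSpace E] [BorelSpace E]
    [FiniteDimensional ℝ E] {μ : Measure E} [μ.IsAddHaarMeasure] (φ : 𝓢(E, F)) (r : ℝ) :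
    Integrable (fun y => (1 + ‖y‖) ^ r * ‖φ y‖) μ := by
  obtain ⟨D, -, hD⟩ := φ.exists_one_add_norm_rpow_mul_norm_le r (Module.finrank ℝ E + 1)
  have hcont : Continuous fun y => (1 + ‖y‖) ^ r * ‖φ y‖ :=
    ((continuous_const.add continuous_norm).rpow_const fun y =>
      Or.inl (by positivity : (0 : ℝ) < 1 + ‖y‖).ne').mul φ.continuous.norm
  refine ((integrable_one_add_norm (lt_add_one _)).const_mul D).mono'
    hcont.aestronglyMeasurable (ae_of_all _ fun y => ?_)
  rw [norm_of_nonneg (by positivity)]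
  exact hD y

lemma exists_bound_sum_norm_comp_dilate (φ : 𝓢(ℝ, F)) :
    ∃ A, 0 ≤ A ∧ ∀ (s : Finset ℕ) (Δ : ℕ → ℝ), (∀ k, 1 ≤ Δ k) → ∀ x : ℝ,
      ∑ k ∈ s, ‖φ ((x - k) * Δ k)‖ ≤ A := by
  obtain ⟨D, hD0, hD⟩ := φ.exists_one_add_norm_rpow_mul_norm_le 0 2
  set f : ℝ → ℝ := fun t => D * (1 + t) ^ (-2 : ℝ)
  have hf : AntitoneOn f (Set.Ici 0) := fun a ha b hb hab => by
    simp only [Set.mem_Ici] at ha hb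
    exact mul_le_mul_of_nonneg_left
      (rpow_le_rpow_of_nonpos (by positivity) (by linarith) (by norm_num)) hD0
  have hf0 : ∀ n : ℕ, 0 ≤ f n := fun n => by positivity
  refine ⟨2 * ∑' n : ℕ, f n, by positivity, fun s Δ hΔ x => ?_⟩
  refine le_trans (Finset.sum_le_sum fun k _ => ?_) (sum_comp_abs_sub_natCast_le_two_mul_tsum
    hf hf0 (summable_one_add_natCast_rpow_neg_two.mul_left D) s x)
  have hdil : |x - k| ≤ |(x - k) * Δ k| := by
    rw [abs_mul]
    exact le_mul_of_one_le_right (abs_nonneg _) ((hΔ k).trans (le_abs_self _))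
  calc ‖φ ((x - k) * Δ k)‖ ≤ f |(x - k) * Δ k| := by
        simpa only [rpow_zero, one_mul, Real.norm_eq_abs] using hD ((x - k) * Δ k)
    _ ≤ f |x - k| := hf (Set.mem_Ici.2 (abs_nonneg _)) (Set.mem_Ici.2 (abs_nonneg _)) hdil

end SchwartzMap

section Bumps

variable {F : Type*} [NormedAddCommGroup F]

lemma lintegral_one_add_abs_rpow_mul_comp_le {g : ℝ → F} {β : ℝ}
    (hg : Integrable fun y => (1 + |y|) ^ |β| * ‖g y‖) (a : ℝ) {Δ : ℝ} (hΔ : 1 ≤ Δ) :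
    ∫⁻ x, ENNReal.ofReal ((1 + |x|) ^ β * ‖g ((x - a) * Δ)‖) ≤
      ENNReal.ofReal ((1 + |a|) ^ β * Δ⁻¹ * ∫ y, (1 + |y|) ^ |β| * ‖g y‖) := by
  set h : ℝ → ℝ := fun y => (1 + |y|) ^ |β| * ‖g y‖
  have hΔ0 : 0 < Δ := by linarith
  have hpt : ∀ x, (1 + |x|) ^ β * ‖g ((x - a) * Δ)‖ ≤ (1 + |a|) ^ β * h ((x - a) * Δ) := by
    intro x
    have hpeetre := one_add_norm_rpow_le_mul_rpow_abs x a β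
    simp only [Real.norm_eq_abs] at hpeetre
    have hdil : |x - a| ≤ |(x - a) * Δ| := by
      rw [abs_mul, abs_of_pos hΔ0]
      exact le_mul_of_one_le_right (abs_nonneg _) hΔ
    calc (1 + |x|) ^ β * ‖g ((x - a) * Δ)‖
        ≤ (1 + |a|) ^ β * (1 + |x - a|) ^ |β| * ‖g ((x - a) * Δ)‖ := by gcongr
      _ ≤ (1 + |a|) ^ β * (1 + |(x - a) * Δ|) ^ |β| * ‖g ((x - a) * Δ)‖ := by gcongr
      _ = (1 + |a|) ^ β * h ((x - a) * Δ) := mul_assoc _ _ _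
  have hint : Integrable fun x => (1 + |a|) ^ β * h ((x - a) * Δ) :=
    ((hg.comp_mul_right' hΔ0.ne').comp_sub_right a).const_mul _
  calc ∫⁻ x, ENNReal.ofReal ((1 + |x|) ^ β * ‖g ((x - a) * Δ)‖)
      ≤ ∫⁻ x, ENNReal.ofReal ((1 + |a|) ^ β * h ((x - a) * Δ)) :=
        lintegral_mono fun x => ENNReal.ofReal_le_ofReal (hpt x)
    _ = ENNReal.ofReal (∫ x, (1 + |a|) ^ β * h ((x - a) * Δ)) :=
        (ofReal_integral_eq_lintegral_ofReal hint (ae_of_all _ fun x => by positivity)).symm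
    _ = ENNReal.ofReal ((1 + |a|) ^ β * Δ⁻¹ * ∫ y, h y) := by
        rw [integral_const_mul, integral_sub_right_eq_self (fun x => h (x * Δ)),
          Measure.integral_comp_mul_right, abs_of_pos (inv_pos.2 hΔ0), smul_eq_mul, mul_assoc]

lemma lintegral_sum_mul_comp_dilate_mul_le {g : ℝ → F} (hg_cont : Continuous g) {β : ℝ}
    (hg : Integrable fun y => (1 + |y|) ^ |β| * ‖g y‖) (s : Finset ℕ) {a Δ : ℕ → ℝ}
    (ha : ∀ k, 0 ≤ a k) (hΔ : ∀ k, 1 ≤ Δ k) :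
    ∫⁻ x, ENNReal.ofReal ((∑ k ∈ s, a k * ‖g ((x - k) * Δ k)‖) * (1 + |x|) ^ β) ≤
      ENNReal.ofReal ((∑ k ∈ s, a k * (((k : ℝ) + 1) ^ β * (Δ k)⁻¹)) *
        ∫ y, (1 + |y|) ^ |β| * ‖g y‖) := by
  set B := ∫ y, (1 + |y|) ^ |β| * ‖g y‖
  have hmeas : ∀ k : ℕ, Measurable fun x : ℝ =>
      ENNReal.ofReal ((1 + |x|) ^ β * ‖g ((x - k) * Δ k)‖) := fun k =>
    (((continuous_const.add continuous_abs).rpow_const fun x =>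
      Or.inl (by positivity : (0 : ℝ) < 1 + |x|).ne').mul
        (hg_cont.comp (by fun_prop)).norm).measurable.ennreal_ofReal
  calc ∫⁻ x, ENNReal.ofReal ((∑ k ∈ s, a k * ‖g ((x - k) * Δ k)‖) * (1 + |x|) ^ β)
      = ∫⁻ x, ∑ k ∈ s, ENNReal.ofReal (a k) *
          ENNReal.ofReal ((1 + |x|) ^ β * ‖g ((x - k) * Δ k)‖) := by
        refine lintegral_congr fun x => ?_
        rw [Finset.sum_mul, ENNReal.ofReal_sum_of_nonneg fun k _ => by have := ha k; positivity]
        refine Finset.sum_congr rfl fun k _ => ?_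
        rw [← ENNReal.ofReal_mul (ha k)]
        ring_nf
    _ = ∑ k ∈ s, ENNReal.ofReal (a k) *
          ∫⁻ x, ENNReal.ofReal ((1 + |x|) ^ β * ‖g ((x - k) * Δ k)‖) := by
        rw [lintegral_finsetSum' _ fun k _ => ((hmeas k).const_mul _).aemeasurable]
        simp_rw [lintegral_const_mul' _ _ ENNReal.ofReal_ne_top]
    _ ≤ ∑ k ∈ s, ENNReal.ofReal (a k) *
          ENNReal.ofReal ((1 + |(k : ℝ)|) ^ β * (Δ k)⁻¹ * B) := by
        gcongr with k
        exact lintegral_one_add_abs_rpow_mul_comp_le hg k (hΔ k)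
    _ = ENNReal.ofReal ((∑ k ∈ s, a k * (((k : ℝ) + 1) ^ β * (Δ k)⁻¹)) * B) := by
        rw [Finset.sum_mul, ENNReal.ofReal_sum_of_nonneg fun k _ => by
          have := ha k; have := hΔ k; positivity]
        refine Finset.sum_congr rfl fun k _ => ?_
        rw [← ENNReal.ofReal_mul (ha k), Nat.abs_cast, add_comm (1 : ℝ)]
        ring_nf

end Bumps

lemma eLpNorm_ofReal_le_of_lintegral_rpow_le {X E : Type*} [MeasurableSpace X] {μ : Measure X}
    [NormedAddCommGroup E] {f : X → E} {p M : ℝ} (hp : 0 < p) (hM : 0 ≤ M)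
    (h : ∫⁻ x, ENNReal.ofReal (‖f x‖ ^ p) ∂μ ≤ ENNReal.ofReal M) :
    eLpNorm f (ENNReal.ofReal p) μ ≤ ENNReal.ofReal (M ^ (1 / p)) := by
  rw [eLpNorm_eq_lintegral_rpow_enorm_toReal (by simpa using hp) ENNReal.ofReal_ne_top,
    ENNReal.toReal_ofReal hp.le, ← ENNReal.ofReal_rpow_of_nonneg hM (by positivity)]
  simp_rw [← ofReal_norm, ENNReal.ofReal_rpow_of_nonneg (norm_nonneg _) hp.le]
  gcongr

/-- weighted L^p bound for F(x)=Σ c_k Δ_k φ((x-k)Δ_k). -/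
theorem stmt6 (p : ℝ) (hp : 1 ≤ p) (φ : SchwartzMap ℝ ℝ) (α : ℝ) :
    ∃ C : ℝ, 0 < C ∧ ∀ (N : ℕ) (Δ : ℕ → ℝ), (∀ k, 1 ≤ Δ k) → ∀ c : ℕ → ℂ,
      eLpNorm
        (fun x : ℝ => (∑ k ∈ Finset.range (N + 1),
            c k * (Δ k : ℂ) * ((φ ((x - k) * Δ k) : ℝ) : ℂ)) * (((1 + |x|) ^ α : ℝ) : ℂ))
        (ENNReal.ofReal p) volume ≤
      ENNReal.ofReal (C * (∑ k ∈ Finset.range (N + 1),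
        ‖c k‖ ^ p * ((k : ℝ) + 1) ^ (p * α) * Δ k ^ (p - 1)) ^ (1 / p)) := by
  have hp0 : 0 < p := by linarith
  obtain ⟨A, hA0, hA⟩ := φ.exists_bound_sum_norm_comp_dilate
  have hφ : Integrable fun y : ℝ => (1 + |y|) ^ |p * α| * ‖φ y‖ := by
    simpa only [Real.norm_eq_abs] using φ.integrable_one_add_norm_rpow_mul_norm (μ := volume) _
  set B := ∫ y, (1 + |y|) ^ |p * α| * ‖φ y‖
  refine ⟨(A ^ (p - 1) * B) ^ (1 / p) + 1, by positivity, fun N Δ hΔ c => ?_⟩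
  set S := ∑ k ∈ Finset.range (N + 1), ‖c k‖ ^ p * ((k : ℝ) + 1) ^ (p * α) * Δ k ^ (p - 1)
  have hS : ∑ k ∈ Finset.range (N + 1),
      ‖c k * Δ k‖ ^ p * (((k : ℝ) + 1) ^ (p * α) * (Δ k)⁻¹) = S :=
    Finset.sum_congr rfl fun k _ => norm_mul_ofReal_rpow_mul_inv _ (by linarith [hΔ k]) _ _
  have hS0 : 0 ≤ S := hS ▸ Finset.sum_nonneg fun k _ => by have := hΔ k; positivity
  refine (eLpNorm_ofReal_le_of_lintegral_rpow_le hp0 (M := A ^ (p - 1) * (S * B))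
    (by positivity) ?_).trans ?_
  · calc _ ≤ ∫⁻ x, ENNReal.ofReal (A ^ (p - 1) * ((∑ k ∈ Finset.range (N + 1),
            ‖c k * Δ k‖ ^ p * ‖φ ((x - k) * Δ k)‖) * (1 + |x|) ^ (p * α))) := by
          refine lintegral_mono fun x => ENNReal.ofReal_le_ofReal ?_
          rw [mul_comm p, rpow_mul (by positivity)]
          exact norm_sum_mul_ofReal_mul_ofReal_rpow_le _ hp _ _ (by positivity) (hA _ Δ hΔ x)
      _ ≤ ENNReal.ofReal (A ^ (p - 1)) * ENNReal.ofReal (S * B) := by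
          simp_rw [ENNReal.ofReal_mul (by positivity : 0 ≤ A ^ (p - 1))]
          rw [lintegral_const_mul' _ _ ENNReal.ofReal_ne_top, ← hS]
          gcongr
          exact lintegral_sum_mul_comp_dilate_mul_le φ.continuous hφ _ (fun k => by positivity) hΔ
      _ = _ := (ENNReal.ofReal_mul (by positivity)).symm
  · rw [mul_left_comm, mul_rpow hS0 (by positivity), mul_comm (S ^ _)]
    gcongr
    linarith
end

section
/- Let φ be a Schwartz function, M ∈ ℕ, (Δ_k) an increasing sequence with Δ_k ≥ 1, and (c_k)_{k=0}^N a bounded sequence. Set F(x) = Σ_{k=0}^N c_k Δ_k φ((x-k)Δ_k). Then there is a constant K_M (depending on φ and M) such that for every positive integer n, |F(n) - φ(0) Δ_n c_n| ≤ K_M ‖c‖_∞ (n^{-1} + Δ_{⌊n/2⌋}^{-1})^{M} (with c_k interpreted as 0 for k > N). -/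
open MeasureTheory Real Filter FourierTransform Topology
open scoped ENNReal NNReal

/-!
Only the off-diagonal terms `Δ_k φ((n - k) Δ_k)`, `k ≠ n`, remain. Schwartz decay of order
`2M + 2` bounds such a term by `(|n - k| Δ_k)⁻¹ ^ M / (n - k) ^ 2`, up to a seminorm of `φ`.
Moreover `(|n - k| Δ_k)⁻¹ ≤ 2 (n⁻¹ + Δ_{⌊n/2⌋}⁻¹)`: for `k ≥ n / 2` by monotonicity of `Δ`,
for `k < n / 2` because then `|n - k| ≥ n / 2`. Summing, `∑_{k ≠ n} (n - k)⁻² ≤ 4`.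
-/

open Finset

lemma sum_inv_sq_le_two {t : Finset ℕ} (ht : 0 ∉ t) : ∑ i ∈ t, ((i : ℝ) ^ 2)⁻¹ ≤ 2 := by
  have hsub : t ⊆ Ioo 0 (t.sup id + 1) := fun i hi =>
    mem_Ioo.2 ⟨Nat.pos_of_ne_zero (by rintro rfl; exact ht hi), Nat.lt_succ_of_le (le_sup (f := id) hi)⟩
  calc ∑ i ∈ t, ((i : ℝ) ^ 2)⁻¹
      ≤ ∑ i ∈ Ioo 0 (t.sup id + 1), ((i : ℝ) ^ 2)⁻¹ :=
        sum_le_sum_of_subset_of_nonneg hsub fun _ _ _ => by positivity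
    _ ≤ 2 / ((0 : ℕ) + 1) := sum_Ioo_inv_sq_le 0 _
    _ = 2 := by norm_num

lemma sum_erase_inv_sq_sub_le_four (s : Finset ℕ) (n : ℕ) :
    ∑ k ∈ s.erase n, (((n : ℝ) - k) ^ 2)⁻¹ ≤ 4 := by
  rw [← sum_filter_add_sum_filter_not _ (· < n)]
  have below : ∑ k ∈ (s.erase n).filter (· < n), (((n : ℝ) - k) ^ 2)⁻¹ ≤ 2 := by
    have hinj : Set.InjOn (n - ·) ((s.erase n).filter (· < n)) := by
      intro a ha b hb h
      simp only [coe_filter, Set.mem_ofPred_eq] at ha hb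
      simp only at h
      omega
    calc ∑ k ∈ (s.erase n).filter (· < n), (((n : ℝ) - k) ^ 2)⁻¹
        = ∑ i ∈ ((s.erase n).filter (· < n)).image (n - ·), ((i : ℝ) ^ 2)⁻¹ := by
          rw [sum_image hinj]
          refine sum_congr rfl fun k hk => ?_
          rw [Nat.cast_sub (mem_filter.1 hk).2.le]
      _ ≤ 2 := sum_inv_sq_le_two (by simp only [mem_image, mem_filter, mem_erase, not_exists, not_and]; omega)
  have above : ∑ k ∈ (s.erase n).filter (¬ · < n), (((n : ℝ) - k) ^ 2)⁻¹ ≤ 2 := by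
    have hinj : Set.InjOn (· - n) ((s.erase n).filter (¬ · < n)) := by
      intro a ha b hb h
      simp only [coe_filter, Set.mem_ofPred_eq] at ha hb
      simp only at h
      omega
    calc ∑ k ∈ (s.erase n).filter (¬ · < n), (((n : ℝ) - k) ^ 2)⁻¹
        = ∑ i ∈ ((s.erase n).filter (¬ · < n)).image (· - n), ((i : ℝ) ^ 2)⁻¹ := by
          rw [sum_image hinj]
          refine sum_congr rfl fun k hk => ?_
          rw [Nat.cast_sub (not_lt.1 (mem_filter.1 hk).2), ← neg_sub, neg_sq]
      _ ≤ 2 := sum_inv_sq_le_two (by simp only [mem_image, mem_filter, mem_erase, not_exists, not_and]; omega)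
  linarith

lemma mul_norm_le_of_pow_mul_norm_le {E : Type*} [SeminormedAddCommGroup E] {g : ℝ → E} {C : ℝ}
    (M : ℕ) (hg : ∀ y, ‖y‖ ^ (2 * M + 2) * ‖g y‖ ≤ C) {x b : ℝ} (hx : 1 ≤ |x|) (hb : 1 ≤ b) :
    b * ‖g (x * b)‖ ≤ C / (x ^ 2 * (|x| * b) ^ M) := by
  set r := |x| * b with hr
  have hr0 : 0 < r := zero_lt_one.trans_le (one_le_mul_of_one_le_of_one_le hx hb)
  have hx0 : 0 < x ^ 2 := by rw [← sq_abs]; positivity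
  have hC : 0 ≤ C := (mul_nonneg (by positivity) (norm_nonneg _)).trans (hg (x * b))
  have hgr : ‖g (x * b)‖ ≤ C / r ^ (2 * M + 2) := by
    rw [le_div_iff₀ (by positivity), mul_comm]
    simpa [abs_mul, abs_of_nonneg (zero_le_one.trans hb)] using hg (x * b)
  have hpow : b * (x ^ 2 * r ^ M) ≤ r ^ (2 * M + 2) := by
    have hx2 : x ^ 2 ≤ |x| ^ (M + 2) := by
      rw [← sq_abs]; exact pow_le_pow_right₀ hx (by omega)
    have hbM : b ≤ b ^ (M + 2) := le_self_pow₀ hb (by omega)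
    calc b * (x ^ 2 * r ^ M) ≤ b ^ (M + 2) * (|x| ^ (M + 2) * r ^ M) := by gcongr
      _ = r ^ (2 * M + 2) := by rw [hr]; ring
  calc b * ‖g (x * b)‖ ≤ b * (C / r ^ (2 * M + 2)) := by gcongr
    _ ≤ C / (x ^ 2 * r ^ M) := by
      rw [mul_div_assoc', div_le_div_iff₀ (by positivity) (by positivity)]
      nlinarith [mul_le_mul_of_nonneg_left hpow hC]

lemma one_le_abs_natCast_sub {n k : ℕ} (hkn : k ≠ n) : 1 ≤ |(n : ℝ) - k| := by
  have : (1 : ℤ) ≤ |(n : ℤ) - k| := Int.one_le_abs (sub_ne_zero.2 (by exact_mod_cast hkn.symm))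
  exact_mod_cast this

lemma inv_abs_sub_mul_le {Δ : ℕ → ℝ} (hΔ : Monotone Δ) (hΔ1 : ∀ k, 1 ≤ Δ k) {n k : ℕ}
    (hkn : k ≠ n) : (|(n : ℝ) - k| * Δ k)⁻¹ ≤ 2 * ((n : ℝ)⁻¹ + (Δ (n / 2))⁻¹) := by
  have hΔpos : ∀ j, 0 < Δ j := fun j => zero_lt_one.trans_le (hΔ1 j)
  have hΔinv : ∀ j, 0 ≤ (Δ j)⁻¹ := fun j => (inv_pos.2 (hΔpos j)).le
  have hn : (0 : ℝ) ≤ (n : ℝ)⁻¹ := by positivity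
  rw [mul_inv]
  rcases le_or_gt (n / 2) k with hk | hk
  · calc |(n : ℝ) - k|⁻¹ * (Δ k)⁻¹ ≤ 1 * (Δ (n / 2))⁻¹ :=
          mul_le_mul (inv_le_one_of_one_le₀ (one_le_abs_natCast_sub hkn))
            (inv_anti₀ (hΔpos _) (hΔ hk)) (hΔinv k) zero_le_one
      _ ≤ 2 * ((n : ℝ)⁻¹ + (Δ (n / 2))⁻¹) := by linarith [hΔinv (n / 2)]
  · have hkn2 : (k : ℝ) + 1 ≤ n / 2 := by
      have : ((k + 1 : ℕ) : ℝ) ≤ ((n / 2 : ℕ) : ℝ) := by exact_mod_cast hk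
      push_cast at this; linarith [Nat.cast_div_le (α := ℝ) (m := n) (n := 2)]
    have hhalf : (n / 2 : ℝ) ≤ |(n : ℝ) - k| := by
      rw [abs_of_pos (by linarith)]; linarith
    calc |(n : ℝ) - k|⁻¹ * (Δ k)⁻¹ ≤ (n / 2 : ℝ)⁻¹ * 1 :=
          mul_le_mul (inv_anti₀ (by linarith [(k.cast_nonneg : (0 : ℝ) ≤ k)]) hhalf)
            (inv_le_one_of_one_le₀ (hΔ1 k)) (hΔinv k) (by positivity)
      _ ≤ 2 * ((n : ℝ)⁻¹ + (Δ (n / 2))⁻¹) := by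
          rw [inv_div, mul_one, div_eq_mul_inv]
          linarith [hΔinv (n / 2)]

lemma SchwartzMap.norm_mul_mul_apply_sub_mul_le (φ : SchwartzMap ℝ ℝ) (M : ℕ) {Δ : ℕ → ℝ}
    (hΔ : Monotone Δ) (hΔ1 : ∀ k, 1 ≤ Δ k) {a : ℂ} {Cb : ℝ} (ha : ‖a‖ ≤ Cb) {n k : ℕ}
    (hkn : k ≠ n) :
    ‖a * (Δ k : ℂ) * ((φ (((n : ℝ) - k) * Δ k) : ℝ) : ℂ)‖ ≤
      Cb * (SchwartzMap.seminorm ℝ (2 * M + 2) 0 φ * (2 * ((n : ℝ)⁻¹ + (Δ (n / 2))⁻¹)) ^ M *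
        (((n : ℝ) - k) ^ 2)⁻¹) := by
  have hterm : Δ k * ‖φ (((n : ℝ) - k) * Δ k)‖ ≤
      SchwartzMap.seminorm ℝ (2 * M + 2) 0 φ * (2 * ((n : ℝ)⁻¹ + (Δ (n / 2))⁻¹)) ^ M *
        (((n : ℝ) - k) ^ 2)⁻¹ :=
    calc Δ k * ‖φ (((n : ℝ) - k) * Δ k)‖
        ≤ SchwartzMap.seminorm ℝ (2 * M + 2) 0 φ /
            (((n : ℝ) - k) ^ 2 * (|(n : ℝ) - k| * Δ k) ^ M) :=
          mul_norm_le_of_pow_mul_norm_le M (SchwartzMap.norm_pow_mul_le_seminorm ℝ φ _)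
            (one_le_abs_natCast_sub hkn) (hΔ1 k)
      _ = SchwartzMap.seminorm ℝ (2 * M + 2) 0 φ * (|(n : ℝ) - k| * Δ k)⁻¹ ^ M *
            (((n : ℝ) - k) ^ 2)⁻¹ := by
          rw [inv_pow, div_eq_mul_inv, mul_inv]; ring
      _ ≤ _ := by
          gcongr
          · exact inv_nonneg.2 (mul_nonneg (abs_nonneg _) (zero_le_one.trans (hΔ1 k)))
          · exact inv_abs_sub_mul_le hΔ hΔ1 hkn
  rw [norm_mul, norm_mul, Complex.norm_real, Complex.norm_real,
    Real.norm_of_nonneg (zero_le_one.trans (hΔ1 k)), mul_assoc]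
  exact mul_le_mul ha hterm (mul_nonneg (zero_le_one.trans (hΔ1 k)) (norm_nonneg _))
    ((norm_nonneg _).trans ha)

/-- |F(n) - φ(0) Δ_n c_n| ≤ K_M ‖c‖_∞ (n⁻¹ + Δ_{⌊n/2⌋}⁻¹)^M. -/
theorem stmt7 (φ : SchwartzMap ℝ ℝ) (M : ℕ) :
    ∃ K : ℝ, ∀ Δ : ℕ → ℝ, Monotone Δ → (∀ k, 1 ≤ Δ k) →
      ∀ (N : ℕ) (c : ℕ → ℂ) (Cb : ℝ), (∀ k, ‖c k‖ ≤ Cb) → (∀ k, N < k → c k = 0) →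
      ∀ n : ℕ, 1 ≤ n →
      ‖(∑ k ∈ Finset.range (N + 1), c k * (Δ k : ℂ) * ((φ (((n : ℝ) - k) * Δ k) : ℝ) : ℂ))
          - ((φ 0 : ℝ) : ℂ) * (Δ n : ℂ) * c n‖ ≤
        K * Cb * (((n : ℝ))⁻¹ + (Δ (n / 2))⁻¹) ^ M := by
  set S := SchwartzMap.seminorm ℝ (2 * M + 2) 0 φ
  refine ⟨4 * 2 ^ M * S, fun Δ hΔ hΔ1 N c Cb hCb hc n _ => ?_⟩
  set P := (n : ℝ)⁻¹ + (Δ (n / 2))⁻¹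
  have hCb0 : 0 ≤ Cb := (norm_nonneg _).trans (hCb 0)
  have hP0 : 0 ≤ P := add_nonneg (by positivity) (inv_nonneg.2 (by linarith [hΔ1 (n / 2)]))
  set F : ℕ → ℂ := fun k => c k * (Δ k : ℂ) * ((φ (((n : ℝ) - k) * Δ k) : ℝ) : ℂ)
  have hdiag : ∑ k ∈ range (N + 1), F k - ((φ 0 : ℝ) : ℂ) * (Δ n : ℂ) * c n =
      ∑ k ∈ (range (N + 1)).erase n, F k := by
    by_cases hn : n ∈ range (N + 1)
    · rw [sum_erase_eq_sub hn]; simp only [F, sub_self, zero_mul]; ring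
    · have hcn : c n = 0 := hc n (by simpa using hn)
      rw [sum_erase _ (by simp [F, hcn])]; simp [hcn]
  rw [hdiag]
  calc ‖∑ k ∈ (range (N + 1)).erase n, F k‖
      ≤ ∑ k ∈ (range (N + 1)).erase n, Cb * (S * (2 * P) ^ M * (((n : ℝ) - k) ^ 2)⁻¹) :=
        (norm_sum_le _ _).trans <| sum_le_sum fun k hk =>
          φ.norm_mul_mul_apply_sub_mul_le M hΔ hΔ1 (hCb k) (ne_of_mem_erase hk)
    _ = Cb * S * (2 * P) ^ M * ∑ k ∈ (range (N + 1)).erase n, (((n : ℝ) - k) ^ 2)⁻¹ := by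
        rw [mul_sum]; exact sum_congr rfl fun _ _ => by ring
    _ ≤ Cb * S * (2 * P) ^ M * 4 := by
        gcongr
        exact sum_erase_inv_sq_sub_le_four _ n
    _ = 4 * 2 ^ M * S * Cb * P ^ M := by rw [mul_pow]; ring
end

section
/- Let φ̂ : ℝ → ℝ be even, non-increasing on [0,∞), supported in (-1,1), equal to 1 on [-1/2,1/2], and Lipschitz with constant L. Let q ≥ 1, β ∈ ℝ with βq + 1 ≥ 0, and let 1 ≤ Δ' ≤ Δ with Δ ≤ CΔ'. Then for every ξ ∈ [0,1], Σ_{j∈ℤ} |ξ+j|^{βq} |φ̂((ξ+j)/Δ) - φ̂((ξ+j)/Δ')| ≤ C' Δ^{βq}(Δ - Δ'), where C' depends only on β, q, C, L. -/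
open MeasureTheory Real Filter FourierTransform Topology
open scoped ENNReal NNReal

/-!
Since `φ̂ = 1` on `[-1/2, 1/2]` and `φ̂ = 0` outside `(-1, 1)`, the term at `j` vanishes unless
`Δ'/2 < |ξ + j| < Δ`. There `|ξ + j| ^ (βq)` is at most `(2C) ^ |βq| Δ ^ (βq)` (as `Δ ≤ CΔ'`), and the
Lipschitz bound gives `|φ̂(t/Δ) - φ̂(t/Δ')| ≤ L |t| (1/Δ' - 1/Δ) ≤ L (Δ - Δ')/Δ'`. At most
`2Δ + 1 ≤ (2C + 1)Δ'` integers contribute, so the `Δ'` cancels.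
-/

theorem Real.rpow_le_rpow_abs_mul_rpow {a K x s : ℝ} (hK : 1 ≤ K) (ha : 0 < a)
    (hx : x ∈ Set.Icc (a / K) a) : x ^ s ≤ K ^ |s| * a ^ s := by
  have hxpos : 0 < x := lt_of_lt_of_le (by positivity) hx.1
  rcases le_or_gt 0 s with hs | hs
  · calc x ^ s ≤ a ^ s := rpow_le_rpow hxpos.le hx.2 hs
      _ ≤ K ^ |s| * a ^ s := le_mul_of_one_le_left (by positivity) (one_le_rpow hK (abs_nonneg s))
  · calc x ^ s ≤ (a / K) ^ s := rpow_le_rpow_of_nonpos (by positivity) hx.1 hs.le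
      _ = K ^ |s| * a ^ s := by
        rw [div_rpow ha.le (by linarith), abs_of_neg hs, rpow_neg (by linarith)]
        ring

theorem Int.card_Icc_ceil_floor_le {x y : ℝ} (hxy : x ≤ y) :
    ((Finset.Icc ⌈x⌉ ⌊y⌋).card : ℝ) ≤ y - x + 1 := by
  have hcard : (((Finset.Icc ⌈x⌉ ⌊y⌋).card : ℤ) : ℝ) = max ((⌊y⌋ + 1 - ⌈x⌉ : ℤ) : ℝ) 0 := by
    rw [Int.card_Icc, Int.toNat_eq_max]
    push_cast
    rfl
  rw [← Int.cast_natCast, hcard]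
  refine max_le ?_ (by linarith)
  push_cast
  linarith [Int.floor_le y, Int.le_ceil x]

theorem summable_and_tsum_le_of_abs_add_le {f : ℤ → ℝ} {ξ R B : ℝ} (hR : 0 ≤ R) (hB : 0 ≤ B)
    (hsupp : ∀ j : ℤ, f j ≠ 0 → |ξ + j| ≤ R) (hle : ∀ j, f j ≤ B) :
    Summable f ∧ ∑' j, f j ≤ (2 * R + 1) * B := by
  set s := Finset.Icc ⌈-R - ξ⌉ ⌊R - ξ⌋
  have hzero : ∀ j ∉ s, f j = 0 := by
    intro j hj
    by_contra hfj
    obtain ⟨hlo, hhi⟩ := abs_le.1 (hsupp j hfj)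
    exact hj (Finset.mem_Icc.2 ⟨Int.ceil_le.2 (by linarith), Int.le_floor.2 (by linarith)⟩)
  refine ⟨summable_of_ne_finset_zero hzero, ?_⟩
  calc ∑' j, f j = ∑ j ∈ s, f j := tsum_eq_sum hzero
    _ ≤ s.card * B := by simpa using Finset.sum_le_card_nsmul s f B fun j _ => hle j
    _ ≤ (2 * R + 1) * B := by
        gcongr
        linarith [Int.card_Icc_ceil_floor_le (x := -R - ξ) (y := R - ξ) (by linarith)]

section Cutoff

variable {φ : ℝ → ℝ} {Δ Δ' t : ℝ}

theorem eq_zero_of_one_le_abs (hsupp : Function.support φ ⊆ Set.Ioo (-1) 1) {x : ℝ}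
    (hx : 1 ≤ |x|) : φ x = 0 := by
  by_contra h
  obtain ⟨h₁, h₂⟩ := hsupp (Function.mem_support.2 h)
  exact absurd (abs_lt.2 ⟨h₁, h₂⟩) hx.not_gt

theorem abs_mem_Ioo_of_sub_comp_div_ne_zero (hsupp : Function.support φ ⊆ Set.Ioo (-1) 1)
    (hone : ∀ x ∈ Set.Icc (-(1/2) : ℝ) (1/2), φ x = 1) (hΔ' : 0 < Δ') (hΔ'Δ : Δ' ≤ Δ)
    (h : φ (t / Δ) - φ (t / Δ') ≠ 0) : |t| ∈ Set.Ioo (Δ' / 2) Δ := by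
  have hΔ : 0 < Δ := hΔ'.trans_le hΔ'Δ
  constructor
  · by_contra! ht
    have hφ : ∀ a, Δ' ≤ a → φ (t / a) = 1 := fun a ha => by
      have hapos : 0 < a := hΔ'.trans_le ha
      refine hone _ (abs_le.1 ?_)
      rw [abs_div, abs_of_pos hapos, div_le_iff₀ hapos]
      linarith
    exact h (by rw [hφ Δ hΔ'Δ, hφ Δ' le_rfl, sub_self])
  · by_contra! ht
    have hφ : ∀ a, 0 < a → a ≤ Δ → φ (t / a) = 0 := fun a hapos ha => by
      refine eq_zero_of_one_le_abs hsupp ?_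
      rw [abs_div, abs_of_pos hapos, le_div_iff₀ hapos]
      linarith
    exact h (by rw [hφ Δ hΔ le_rfl, hφ Δ' hΔ' hΔ'Δ, sub_self])

theorem abs_sub_comp_div_le {L : ℝ≥0} (hlip : LipschitzWith L φ) (hΔ' : 0 < Δ') (hΔ'Δ : Δ' ≤ Δ)
    (ht : |t| ≤ Δ) : |φ (t / Δ) - φ (t / Δ')| ≤ L * ((Δ - Δ') / Δ') := by
  have hΔ : 0 < Δ := hΔ'.trans_le hΔ'Δ
  have hdiff : |t / Δ - t / Δ'| = |t| * ((Δ - Δ') / (Δ * Δ')) := by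
    rw [show t / Δ - t / Δ' = -(t * ((Δ - Δ') / (Δ * Δ'))) by field_simp; ring, abs_neg, abs_mul,
      abs_of_nonneg (div_nonneg (sub_nonneg.2 hΔ'Δ) (mul_pos hΔ hΔ').le)]
  calc |φ (t / Δ) - φ (t / Δ')| ≤ L * |t / Δ - t / Δ'| := by
        simpa only [Real.dist_eq] using hlip.dist_le_mul (t / Δ) (t / Δ')
    _ ≤ L * (Δ * ((Δ - Δ') / (Δ * Δ'))) := by
        rw [hdiff]
        gcongr
    _ = L * ((Δ - Δ') / Δ') := by field_simp

theorem rpow_abs_mul_abs_sub_comp_div_le {L : ℝ≥0} {C s : ℝ}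
    (hsupp : Function.support φ ⊆ Set.Ioo (-1) 1)
    (hone : ∀ x ∈ Set.Icc (-(1/2) : ℝ) (1/2), φ x = 1) (hlip : LipschitzWith L φ) (hΔ' : 0 < Δ')
    (hΔ'Δ : Δ' ≤ Δ) (hΔC : Δ ≤ C * Δ') :
    |t| ^ s * |φ (t / Δ) - φ (t / Δ')| ≤ (2 * C) ^ |s| * Δ ^ s * (L * ((Δ - Δ') / Δ')) := by
  have hC : 1 ≤ C := by nlinarith
  have hΔ : 0 < Δ := hΔ'.trans_le hΔ'Δ
  by_cases h : φ (t / Δ) - φ (t / Δ') = 0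
  · rw [h, abs_zero, mul_zero]
    have : 0 ≤ Δ - Δ' := sub_nonneg.2 hΔ'Δ
    have : 0 < 2 * C := by linarith
    positivity
  obtain ⟨hlo, hhi⟩ := abs_mem_Ioo_of_sub_comp_div_ne_zero hsupp hone hΔ' hΔ'Δ h
  have hpow := Real.rpow_le_rpow_abs_mul_rpow (s := s) (by linarith : (1 : ℝ) ≤ 2 * C) hΔ
    ⟨by rw [div_le_iff₀ (by linarith)]; nlinarith, hhi.le⟩
  exact mul_le_mul hpow (abs_sub_comp_div_le hlip hΔ' hΔ'Δ hhi.le) (abs_nonneg _) (by positivity)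

end Cutoff

theorem stmt8_general (β q C : ℝ) (L : ℝ≥0) :
    ∃ C' : ℝ, ∀ φhat : ℝ → ℝ, (∀ x, φhat (-x) = φhat x) →
      AntitoneOn φhat (Set.Ici 0) →
      Function.support φhat ⊆ Set.Ioo (-1) 1 →
      (∀ x ∈ Set.Icc (-(1/2) : ℝ) (1/2), φhat x = 1) →
      LipschitzWith L φhat →
      ∀ Δ Δ' : ℝ, 1 ≤ Δ' → Δ' ≤ Δ → Δ ≤ C * Δ' →
      ∀ ξ ∈ Set.Icc (0 : ℝ) 1,
        (Summable fun j : ℤ =>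
          |ξ + j| ^ (β * q) * |φhat ((ξ + j) / Δ) - φhat ((ξ + j) / Δ')|) ∧
        ∑' j : ℤ, |ξ + j| ^ (β * q) * |φhat ((ξ + j) / Δ) - φhat ((ξ + j) / Δ')| ≤
          C' * Δ ^ (β * q) * (Δ - Δ') := by
  refine ⟨(2 * C + 1) * (2 * C) ^ |β * q| * L, ?_⟩
  intro φ _ _ hsupp hone hlip Δ Δ' hΔ' hΔ'Δ hΔC ξ _
  have hΔ'pos : 0 < Δ' := by linarith
  have hC : 1 ≤ C := by nlinarith
  set B := (2 * C) ^ |β * q| * Δ ^ (β * q) * (L * ((Δ - Δ') / Δ'))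
  have hB : 0 ≤ B := by
    have : 0 ≤ Δ - Δ' := by linarith
    have : 0 < 2 * C := by linarith
    have : 0 < Δ := by linarith
    positivity
  have hsupport (j : ℤ) (hj : |ξ + j| ^ (β * q) * |φ ((ξ + j) / Δ) - φ ((ξ + j) / Δ')| ≠ 0) :
      |ξ + j| ≤ Δ :=
    (abs_mem_Ioo_of_sub_comp_div_ne_zero hsupp hone hΔ'pos hΔ'Δ
      (abs_ne_zero.1 (right_ne_zero_of_mul hj))).2.le
  obtain ⟨hsum, htsum⟩ := summable_and_tsum_le_of_abs_add_le (by linarith) hB hsupport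
    fun j => rpow_abs_mul_abs_sub_comp_div_le hsupp hone hlip hΔ'pos hΔ'Δ hΔC
  refine ⟨hsum, htsum.trans ?_⟩
  calc (2 * Δ + 1) * B ≤ ((2 * C + 1) * Δ') * B := by gcongr; nlinarith
    _ = (2 * C + 1) * (2 * C) ^ |β * q| * L * Δ ^ (β * q) * (Δ - Δ') := by
        unfold B; field_simp

/-- kernel estimate Σ_j |ξ+j|^{βq} |φ̂((ξ+j)/Δ) - φ̂((ξ+j)/Δ')| ≤ C' Δ^{βq}(Δ-Δ'). -/
theorem stmt8 (β q C : ℝ) (L : ℝ≥0) (hq : 1 ≤ q) (hβq : 0 ≤ β * q + 1) (hC : 1 ≤ C) :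
    ∃ C' : ℝ, ∀ φhat : ℝ → ℝ, (∀ x, φhat (-x) = φhat x) →
      AntitoneOn φhat (Set.Ici 0) →
      Function.support φhat ⊆ Set.Ioo (-1) 1 →
      (∀ x ∈ Set.Icc (-(1/2) : ℝ) (1/2), φhat x = 1) →
      LipschitzWith L φhat →
      ∀ Δ Δ' : ℝ, 1 ≤ Δ' → Δ' ≤ Δ → Δ ≤ C * Δ' →
      ∀ ξ ∈ Set.Icc (0 : ℝ) 1,
        (Summable fun j : ℤ =>
          |ξ + j| ^ (β * q) * |φhat ((ξ + j) / Δ) - φhat ((ξ + j) / Δ')|) ∧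
        ∑' j : ℤ, |ξ + j| ^ (β * q) * |φhat ((ξ + j) / Δ) - φhat ((ξ + j) / Δ')| ≤
          C' * Δ ^ (β * q) * (Δ - Δ') :=
  stmt8_general β q C L
end

section
/- Let q ∈ [1,∞), N ∈ ℕ, and let (w_k)_{k=0}^N be non-negative reals and (c_k)_{k=0}^N complex numbers. For signs ε ∈ {-1,1}^{N+1}, put S_n^ε(x) = Σ_{k=0}^n ε_k c_k e^{2πi k x}. Then there exists a choice of signs ε such that (Σ_{k=0}^N w_k ‖S_k^ε‖_{L^q(𝕋)}^q)^{1/q} ≤ C_q (Σ_{k=0}^N w_k ‖S_k^ε‖_{L^2(𝕋)}^q)^{1/q}, where ‖S_k^ε‖_{L^2(𝕋)}^2 = Σ_{j=0}^k |c_j|^2 does not depend on ε and C_q depends only on q. -/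
/-!
Khintchine's inequality through the exponential moment: averaged over independent signs,
`exp (∑ εᵢ aᵢ)` has mean `∏ cosh aᵢ ≤ exp (∑ aᵢ² / 2)`, while `|x| ^ q ≤ ⌈q⌉! (eˣ + e⁻ˣ)`;
after normalising `∑ aᵢ² = 1` this bounds the `q`-th moment of `∑ εᵢ aᵢ` by a constant
depending only on `q`. Complex coefficients are split into real and imaginary parts.
Applied pointwise in `x` to the coefficients `c_j e^{2πijx}`, which have modulus `|c_j|`,
and integrated, this shows that the average over all sign choices of `∑ w_k ‖S_k^ε‖_q^q`
is at most `C ∑ w_k ‖S_k‖_2^q`, so some choice of signs does at least as well as the average.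
-/

open Finset Real
open scoped Nat

lemma Real.add_rpow_le_two_rpow_mul_rpow_add_rpow {p x y : ℝ} (hx : 0 ≤ x) (hy : 0 ≤ y)
    (hp : 0 ≤ p) : (x + y) ^ p ≤ 2 ^ p * (x ^ p + y ^ p) := calc
  (x + y) ^ p ≤ (2 * max x y) ^ p := by
    rw [two_mul]; gcongr <;> simp
  _ = 2 ^ p * (max x y) ^ p := mul_rpow zero_le_two (le_max_of_le_left hx)
  _ ≤ 2 ^ p * (x ^ p + y ^ p) := by
    gcongr
    rcases le_total x y with h | h
    · rw [max_eq_right h]; linarith [rpow_nonneg hx p]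
    · rw [max_eq_left h]; linarith [rpow_nonneg hy p]

lemma abs_rpow_le_factorial_mul_exp {q : ℝ} (hq : 0 ≤ q) (x : ℝ) :
    |x| ^ q ≤ ⌈q⌉₊ ! * (exp x + exp (-x)) := by
  have hfac : (1 : ℝ) ≤ ⌈q⌉₊ ! := mod_cast Nat.factorial_pos _
  calc |x| ^ q ≤ ⌈q⌉₊ ! * exp |x| := by
        rcases le_total |x| 1 with h | h
        · calc |x| ^ q ≤ 1 := rpow_le_one (abs_nonneg x) h hq
            _ ≤ ⌈q⌉₊ ! * exp |x| := one_le_mul_of_one_le_of_one_le hfac (one_le_exp (abs_nonneg x))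
        · calc |x| ^ q ≤ |x| ^ (⌈q⌉₊ : ℝ) := rpow_le_rpow_of_exponent_le h (Nat.le_ceil q)
            _ = |x| ^ ⌈q⌉₊ := rpow_natCast _ _
            _ ≤ ⌈q⌉₊ ! * exp |x| := by
              rw [← div_le_iff₀' (by positivity)]
              exact pow_div_factorial_le_exp _ (abs_nonneg x) _
    _ ≤ ⌈q⌉₊ ! * (exp x + exp (-x)) := by gcongr; exact exp_abs_le x

lemma abs_rpow_le_rpow_mul_factorial_mul_exp {q t : ℝ} (hq : 0 ≤ q) (ht : 0 < t) (x : ℝ) :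
    |x| ^ q ≤ t ^ q * ⌈q⌉₊ ! * (exp (x / t) + exp (-(x / t))) := calc
  |x| ^ q = (t * |x / t|) ^ q := by rw [abs_div, abs_of_pos ht, mul_div_cancel₀ _ ht.ne']
  _ = t ^ q * |x / t| ^ q := mul_rpow ht.le (abs_nonneg _)
  _ ≤ t ^ q * ⌈q⌉₊ ! * (exp (x / t) + exp (-(x / t))) := by
    rw [mul_assoc]; gcongr; exact abs_rpow_le_factorial_mul_exp hq _

section Khintchine

variable {ι : Type*} [Fintype ι] [DecidableEq ι]

lemma sum_exp_sum_sign_mul (a : ι → ℝ) :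
    ∑ ε : ι → ℤˣ, exp (∑ i, ((ε i : ℤ) : ℝ) * a i) = ∏ i, 2 * cosh (a i) := by
  simp_rw [exp_sum]
  rw [← Fintype.prod_sum (fun i (u : ℤˣ) => exp ((u : ℤ) * a i))]
  congr 1 with i
  simp [cosh_eq, mul_div_cancel₀]

lemma sum_exp_sum_sign_mul_le (a : ι → ℝ) :
    ∑ ε : ι → ℤˣ, exp (∑ i, ((ε i : ℤ) : ℝ) * a i) ≤
      2 ^ Fintype.card ι * exp ((∑ i, a i ^ 2) / 2) := by
  rw [sum_exp_sum_sign_mul, prod_mul_distrib, prod_const, card_univ, sum_div, exp_sum]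
  gcongr with i
  exact cosh_le_exp_half_sq _

noncomputable def khintchineConst (q : ℝ) : ℝ := 2 * exp (1 / 2) * ⌈q⌉₊ !

lemma khintchineConst_pos (q : ℝ) : 0 < khintchineConst q := by
  unfold khintchineConst; positivity

theorem sum_abs_sum_sign_mul_rpow_le {q : ℝ} (hq : 0 < q) (a : ι → ℝ) :
    ∑ ε : ι → ℤˣ, |∑ i, ((ε i : ℤ) : ℝ) * a i| ^ q ≤
      2 ^ Fintype.card ι * khintchineConst q * (∑ i, a i ^ 2) ^ (q / 2) := by
  have hS0 : 0 ≤ ∑ i, a i ^ 2 := sum_nonneg fun i _ => sq_nonneg (a i)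
  rcases hS0.eq_or_lt with hS | hS
  · have ha : ∀ i, a i = 0 := fun i =>
      pow_eq_zero_iff two_ne_zero |>.1 <|
        (sum_eq_zero_iff_of_nonneg fun i _ => sq_nonneg (a i)).1 hS.symm i (mem_univ i)
    simp [ha, zero_rpow hq.ne', zero_rpow (half_pos hq).ne']
  -- Rescale by `t = √(∑ aᵢ²)`, so that the coefficients `aᵢ / t` form a unit vector.
  obtain ⟨t, ht, ht2⟩ : ∃ t, 0 < t ∧ t ^ 2 = ∑ i, a i ^ 2 := ⟨_, sqrt_pos.2 hS, sq_sqrt hS.le⟩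
  have hunit : ∑ i, (a i / t) ^ 2 = 1 := by
    simp_rw [div_pow, ← sum_div, ← ht2, div_self (pow_pos ht 2).ne']
  have hpointwise : ∀ ε : ι → ℤˣ, |∑ i, ((ε i : ℤ) : ℝ) * a i| ^ q ≤
      t ^ q * ⌈q⌉₊ ! * (exp (∑ i, ((ε i : ℤ) : ℝ) * (a i / t)) +
        exp (∑ i, ((ε i : ℤ) : ℝ) * -(a i / t))) := by
    intro ε
    have hX : ∑ i, ((ε i : ℤ) : ℝ) * (a i / t) = (∑ i, ((ε i : ℤ) : ℝ) * a i) / t := by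
      simp_rw [sum_div, mul_div_assoc]
    simp_rw [mul_neg, sum_neg_distrib, hX]
    exact abs_rpow_le_rpow_mul_factorial_mul_exp hq.le ht _
  calc ∑ ε : ι → ℤˣ, |∑ i, ((ε i : ℤ) : ℝ) * a i| ^ q
      ≤ t ^ q * ⌈q⌉₊ ! * (∑ ε : ι → ℤˣ, exp (∑ i, ((ε i : ℤ) : ℝ) * (a i / t)) +
          ∑ ε : ι → ℤˣ, exp (∑ i, ((ε i : ℤ) : ℝ) * -(a i / t))) := by
        rw [← sum_add_distrib, mul_sum]; exact sum_le_sum fun ε _ => hpointwise ε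
    _ ≤ t ^ q * ⌈q⌉₊ ! * (2 ^ Fintype.card ι * exp (1 / 2) + 2 ^ Fintype.card ι * exp (1 / 2)) := by
        gcongr
        · simpa [hunit] using sum_exp_sum_sign_mul_le fun i => a i / t
        · simpa [hunit] using sum_exp_sum_sign_mul_le fun i => -(a i / t)
    _ = 2 ^ Fintype.card ι * khintchineConst q * (∑ i, a i ^ 2) ^ (q / 2) := by
        have htq : (t ^ 2) ^ (q / 2) = t ^ q := by
          rw [← rpow_natCast, ← rpow_mul ht.le]; congr 1; push_cast; ring
        rw [khintchineConst, ← ht2, htq]; ring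

theorem sum_norm_sum_sign_mul_rpow_le {q : ℝ} (hq : 0 < q) (z : ι → ℂ) :
    ∑ ε : ι → ℤˣ, ‖∑ i, ((ε i : ℤ) : ℂ) * z i‖ ^ q ≤
      2 ^ Fintype.card ι * (2 ^ (q + 1) * khintchineConst q) * (∑ i, ‖z i‖ ^ 2) ^ (q / 2) := by
  have hpointwise : ∀ ε : ι → ℤˣ, ‖∑ i, ((ε i : ℤ) : ℂ) * z i‖ ^ q ≤
      2 ^ q * (|∑ i, ((ε i : ℤ) : ℝ) * (z i).re| ^ q + |∑ i, ((ε i : ℤ) : ℝ) * (z i).im| ^ q) := by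
    intro ε
    have hre : (∑ i, ((ε i : ℤ) : ℂ) * z i).re = ∑ i, ((ε i : ℤ) : ℝ) * (z i).re := by
      simp [Complex.re_sum]
    have him : (∑ i, ((ε i : ℤ) : ℂ) * z i).im = ∑ i, ((ε i : ℤ) : ℝ) * (z i).im := by
      simp [Complex.im_sum]
    rw [← hre, ← him]
    exact (rpow_le_rpow (norm_nonneg _) (Complex.norm_le_abs_re_add_abs_im _) hq.le).trans
      (add_rpow_le_two_rpow_mul_rpow_add_rpow (abs_nonneg _) (abs_nonneg _) hq.le)
  have hcoord : ∀ f : ℂ → ℝ, (∀ w, |f w| ≤ ‖w‖) →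
      (∑ i, f (z i) ^ 2) ^ (q / 2) ≤ (∑ i, ‖z i‖ ^ 2) ^ (q / 2) := fun f hf =>
    rpow_le_rpow (sum_nonneg fun i _ => sq_nonneg _)
      (sum_le_sum fun i _ => sq_le_sq.2 ((hf _).trans (le_abs_self _))) (half_pos hq).le
  have hK := khintchineConst_pos q
  calc ∑ ε : ι → ℤˣ, ‖∑ i, ((ε i : ℤ) : ℂ) * z i‖ ^ q
      ≤ 2 ^ q * (∑ ε : ι → ℤˣ, |∑ i, ((ε i : ℤ) : ℝ) * (z i).re| ^ q +
          ∑ ε : ι → ℤˣ, |∑ i, ((ε i : ℤ) : ℝ) * (z i).im| ^ q) := by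
        rw [← sum_add_distrib, mul_sum]; exact sum_le_sum fun ε _ => hpointwise ε
    _ ≤ 2 ^ q * (2 ^ Fintype.card ι * khintchineConst q * (∑ i, (z i).re ^ 2) ^ (q / 2) +
          2 ^ Fintype.card ι * khintchineConst q * (∑ i, (z i).im ^ 2) ^ (q / 2)) := by
        gcongr <;> exact sum_abs_sum_sign_mul_rpow_le hq _
    _ ≤ 2 ^ q * (2 ^ Fintype.card ι * khintchineConst q * (∑ i, ‖z i‖ ^ 2) ^ (q / 2) +
          2 ^ Fintype.card ι * khintchineConst q * (∑ i, ‖z i‖ ^ 2) ^ (q / 2)) := by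
        gcongr ?_ * (_ * ?_ + _ * ?_)
        · exact hcoord _ Complex.abs_re_le_norm
        · exact hcoord _ Complex.abs_im_le_norm
    _ = _ := by rw [rpow_add two_pos, rpow_one]; ring

theorem sum_intervalIntegral_norm_sum_sign_mul_rpow_le {q : ℝ} (hq : 0 < q) {a b : ℝ}
    (hab : a ≤ b) {f : ι → ℝ → ℂ} (hf : ∀ i, Continuous (f i)) {S : ℝ}
    (hS : ∀ x, ∑ i, ‖f i x‖ ^ 2 ≤ S) :
    ∑ ε : ι → ℤˣ, ∫ x in a..b, ‖∑ i, ((ε i : ℤ) : ℂ) * f i x‖ ^ q ≤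
      (b - a) * (2 ^ Fintype.card ι * (2 ^ (q + 1) * khintchineConst q) * S ^ (q / 2)) := by
  have hcont : ∀ ε : ι → ℤˣ, Continuous fun x => ‖∑ i, ((ε i : ℤ) : ℂ) * f i x‖ ^ q :=
    fun ε => (continuous_finsetSum _ fun i _ => continuous_const.mul (hf i)).norm.rpow_const
      fun _ => Or.inr hq.le
  rw [← intervalIntegral.integral_finsetSum fun ε _ => (hcont ε).intervalIntegrable a b]
  calc ∫ x in a..b, ∑ ε : ι → ℤˣ, ‖∑ i, ((ε i : ℤ) : ℂ) * f i x‖ ^ q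
      ≤ ∫ _ in a..b, 2 ^ Fintype.card ι * (2 ^ (q + 1) * khintchineConst q) * S ^ (q / 2) := by
        refine intervalIntegral.integral_mono_on hab
          ((continuous_finsetSum _ fun ε _ => hcont ε).intervalIntegrable a b)
          intervalIntegrable_const fun x _ => (sum_norm_sum_sign_mul_rpow_le hq _).trans ?_
        have hK := khintchineConst_pos q
        gcongr
        exact hS x
    _ = _ := by rw [intervalIntegral.integral_const, smul_eq_mul]

end Khintchine

noncomputable def signSeq {n : ℕ} (ε : Fin n → ℤˣ) (j : ℕ) : ℝ :=
  if h : j < n then ((ε ⟨j, h⟩ : ℤ) : ℝ) else 1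

lemma signSeq_eq_one_or {n : ℕ} (ε : Fin n → ℤˣ) (j : ℕ) : signSeq ε j = 1 ∨ signSeq ε j = -1 := by
  unfold signSeq
  split_ifs with hj
  · rcases Int.units_eq_one_or (ε ⟨j, hj⟩) with h | h <;> simp [h]
  · exact Or.inl rfl

lemma Fin.sum_ite_le_eq_sum_range {M : Type*} [AddCommMonoid M] {n k : ℕ} (hk : k < n)
    (g : ℕ → M) : ∑ i : Fin n, (if (i : ℕ) ≤ k then g i else 0) = ∑ j ∈ range (k + 1), g j := by
  rw [Fin.sum_univ_eq_sum_range (fun j => if j ≤ k then g j else 0), ← sum_filter]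
  congr 1; ext j
  simp only [mem_filter, mem_range, Order.lt_add_one_iff, and_iff_right_iff_imp]; omega

theorem sum_sign_intervalIntegral_norm_partialSum_rpow_le {q : ℝ} (hq : 0 < q) (c : ℕ → ℂ)
    {n k : ℕ} (hk : k < n) :
    ∑ ε : Fin n → ℤˣ, ∫ x in (0:ℝ)..1, ‖∑ j ∈ range (k + 1),
        (signSeq ε j : ℂ) * c j * Complex.exp (2 * π * Complex.I * j * x)‖ ^ q ≤
      2 ^ n * (2 ^ (q + 1) * khintchineConst q) * (∑ j ∈ range (k + 1), ‖c j‖ ^ 2) ^ (q / 2) := by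
  set f : Fin n → ℝ → ℂ := fun i x =>
    if (i : ℕ) ≤ k then c i * Complex.exp (2 * π * Complex.I * i * x) else 0
  have hsum : ∀ (ε : Fin n → ℤˣ) (x : ℝ), ∑ j ∈ range (k + 1),
      (signSeq ε j : ℂ) * c j * Complex.exp (2 * π * Complex.I * j * x) =
        ∑ i, ((ε i : ℤ) : ℂ) * f i x := by
    intro ε x
    rw [← Fin.sum_ite_le_eq_sum_range hk]
    refine sum_congr rfl fun i _ => ?_
    simp [f, signSeq, mul_assoc]
  have hnorm : ∀ x, ∑ i, ‖f i x‖ ^ 2 = ∑ j ∈ range (k + 1), ‖c j‖ ^ 2 := by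
    intro x
    rw [← Fin.sum_ite_le_eq_sum_range hk]
    refine sum_congr rfl fun i _ => ?_
    by_cases h : (i : ℕ) ≤ k <;> simp [f, h, Complex.norm_exp]
  have hf : ∀ i, Continuous (f i) := fun i => by
    simp only [f]; split_ifs <;> fun_prop
  simp_rw [hsum]
  simpa using
    sum_intervalIntegral_norm_sum_sign_mul_rpow_le hq zero_le_one hf fun x => (hnorm x).le

theorem exists_sign_weighted_sum_integral_le {q : ℝ} (hq : 0 < q) (N : ℕ) {w : ℕ → ℝ}
    (hw : ∀ k, 0 ≤ w k) (c : ℕ → ℂ) :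
    ∃ ε : Fin (N + 1) → ℤˣ, ∑ k ∈ range (N + 1), w k *
        ∫ x in (0:ℝ)..1, ‖∑ j ∈ range (k + 1),
          (signSeq ε j : ℂ) * c j * Complex.exp (2 * π * Complex.I * j * x)‖ ^ q ≤
      2 ^ (q + 1) * khintchineConst q *
        ∑ k ∈ range (N + 1), w k * (∑ j ∈ range (k + 1), ‖c j‖ ^ 2) ^ (q / 2) := by
  refine exists_le_of_sum_le univ_nonempty ?_ |>.imp fun ε => And.right
  calc
    _ = ∑ k ∈ range (N + 1), w k * ∑ ε : Fin (N + 1) → ℤˣ, ∫ x in (0:ℝ)..1,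
        ‖∑ j ∈ range (k + 1), (signSeq ε j : ℂ) * c j *
          Complex.exp (2 * π * Complex.I * j * x)‖ ^ q := by
      simp only [mul_sum]; exact sum_comm
    _ ≤ ∑ k ∈ range (N + 1), w k * (2 ^ (N + 1) * (2 ^ (q + 1) * khintchineConst q) *
        (∑ j ∈ range (k + 1), ‖c j‖ ^ 2) ^ (q / 2)) :=
      sum_le_sum fun k hk => mul_le_mul_of_nonneg_left
        (sum_sign_intervalIntegral_norm_partialSum_rpow_le hq c (mem_range.1 hk)) (hw k)
    _ = _ := by
      rw [sum_const, card_univ, Fintype.card_fun, Fintype.card_fin, Fintype.card_units_int,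
        nsmul_eq_mul, mul_sum, mul_sum]
      push_cast
      exact sum_congr rfl fun k _ => by ring

/-- randomization: some choice of signs ε makes the weighted ℓ^q average
of ‖S_k^ε‖_{L^q(𝕋)} controlled by that of ‖S_k‖_{L^2(𝕋)}. -/
theorem stmt10 (q : ℝ) (hq : 1 ≤ q) :
    ∃ Cq : ℝ, ∀ (N : ℕ) (w : ℕ → ℝ) (c : ℕ → ℂ), (∀ k, 0 ≤ w k) →
      ∃ ε : ℕ → ℝ, (∀ k, ε k = 1 ∨ ε k = -1) ∧
        (∑ k ∈ Finset.range (N + 1), w k *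
            ∫ x in (0:ℝ)..1, ‖∑ j ∈ Finset.range (k + 1),
              (ε j : ℂ) * c j * Complex.exp (2 * Real.pi * Complex.I * j * x)‖ ^ q) ^ (1/q) ≤
        Cq * (∑ k ∈ Finset.range (N + 1), w k *
            (∑ j ∈ Finset.range (k + 1), ‖c j‖ ^ 2) ^ (q / 2)) ^ (1/q) := by
  have hq0 : 0 < q := by linarith
  have hK : 0 ≤ 2 ^ (q + 1) * khintchineConst q :=
    (mul_pos (by positivity) (khintchineConst_pos q)).le
  refine ⟨(2 ^ (q + 1) * khintchineConst q) ^ (1 / q), fun N w c hw => ?_⟩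
  obtain ⟨ε, hε⟩ := exists_sign_weighted_sum_integral_le hq0 N hw c
  refine ⟨signSeq ε, signSeq_eq_one_or ε, ?_⟩
  have hLHS : 0 ≤ ∑ k ∈ range (N + 1), w k * ∫ x in (0:ℝ)..1, ‖∑ j ∈ range (k + 1),
      (signSeq ε j : ℂ) * c j * Complex.exp (2 * π * Complex.I * j * x)‖ ^ q :=
    sum_nonneg fun k _ => mul_nonneg (hw k) <|
      intervalIntegral.integral_nonneg zero_le_one fun x _ => rpow_nonneg (norm_nonneg _) q
  have hR : 0 ≤ ∑ k ∈ range (N + 1), w k * (∑ j ∈ range (k + 1), ‖c j‖ ^ 2) ^ (q / 2) :=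
    sum_nonneg fun k _ => mul_nonneg (hw k) (by positivity)
  exact (rpow_le_rpow hLHS hε (by positivity)).trans_eq (mul_rpow hK hR)
end

section
/- Let 1 < q < ∞, B = (1/q)/(β - 1/q') with β > 1/q', A = β/(β - 1/q'), and set c_j = (j+1)^{-(1+B)} (log(j+2))^{-A}. Then for the tail sums one has Σ_{j=k}^{∞} c_j^q (j - k + 1)^{q-2} ≤ C k^{-Bq - 1} (log(k+2))^{-qA} for all k ≥ 1, with C depending only on q, A, B. -/
/-!
Bound `log (j + k + 2)` below by `log (k + 2)`; what remains is a power sum. Split it at `j = k`.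
For `j < k` we have `j + k + 1 ≥ k`, and `∑_{j<k} (j+1)^(q-2) ≲ k^(q-1)` by comparison with
`∫₀ᵏ (x+1)^(q-2) dx`. For `j ≥ k` we have `j + k + 1 ≥ j + 1`, so the terms are
`≲ (j+1)^(-(Bq+2))`, whose tail from `k` is `≲ k^(-(Bq+1))` by the integral test.
Both pieces are `≲ k^(-Bq-1)`.
-/

open Real

lemma rpow_le_two_rpow_abs_mul_rpow {y z : ℝ} (a : ℝ) (hy : 0 < y) (hyz : y ≤ z)
    (hz : z ≤ 2 * y) : y ^ a ≤ 2 ^ |a| * z ^ a := by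
  rcases le_total 0 a with ha | ha
  · calc y ^ a ≤ z ^ a := rpow_le_rpow hy.le hyz ha
      _ ≤ 2 ^ |a| * z ^ a :=
          le_mul_of_one_le_left (rpow_nonneg (hy.le.trans hyz) a)
            (one_le_rpow one_le_two (abs_nonneg a))
  · calc y ^ a = 2 ^ (-a) * (2 * y) ^ a := by
          rw [mul_rpow zero_le_two hy.le, ← mul_assoc, ← rpow_add zero_lt_two]; simp
      _ ≤ 2 ^ |a| * z ^ a := by
          rw [abs_of_nonpos ha]; gcongr 2 ^ (-a) * ?_
          exact rpow_le_rpow_of_nonpos (hy.trans_le hyz) hz ha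

lemma sum_range_add_one_rpow_le {p : ℝ} (hp : 0 < p) (n : ℕ) :
    ∑ i ∈ Finset.range n, ((i : ℝ) + 1) ^ (p - 1) ≤
      2 ^ |p - 1| / p * ((n : ℝ) + 1) ^ p := by
  have hint : ∫ x in (0 : ℝ)..n, (x + 1) ^ (p - 1) = (((n : ℝ) + 1) ^ p - 1) / p := by
    rw [intervalIntegral.integral_comp_add_right (fun x => x ^ (p - 1)),
      integral_rpow (Or.inl (by linarith))]
    simp
  calc ∑ i ∈ Finset.range n, ((i : ℝ) + 1) ^ (p - 1)
      ≤ ∫ x in (0 : ℝ)..n, 2 ^ |p - 1| * (x + 1) ^ (p - 1) := by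
        have := sum_Ico_le_integral_of_le (f := fun x => (x + 1) ^ (p - 1))
          (g := fun x => 2 ^ |p - 1| * (x + 1) ^ (p - 1)) (Nat.zero_le n) (fun i _ x hx => ?_) ?_
        · rw [Finset.range_eq_Ico]; simpa using this
        · obtain ⟨hix, hxi⟩ := hx
          push_cast at hxi
          exact rpow_le_two_rpow_abs_mul_rpow _ (by positivity) (by linarith) (by linarith)
        · refine (ContinuousOn.integrableOn_Icc ?_).mono_set Set.Ico_subset_Icc_self
          refine continuousOn_const.mul (continuousOn_id.add continuousOn_const |>.rpow_const ?_)
          exact fun x hx => Or.inl (by linarith [hx.1] : (0 : ℝ) < x + 1).ne'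
    _ = 2 ^ |p - 1| / p * (((n : ℝ) + 1) ^ p - 1) := by
        rw [intervalIntegral.integral_const_mul, hint]; ring
    _ ≤ 2 ^ |p - 1| / p * ((n : ℝ) + 1) ^ p := by gcongr; linarith

lemma tsum_nat_add_rpow_le {r : ℝ} (hr : 0 < r) {k : ℕ} (hk : 0 < k) :
    ∑' n : ℕ, ((n : ℝ) + k + 1) ^ (-(r + 1)) ≤ (k : ℝ) ^ (-r) / r := by
  have hk' : (0 : ℝ) < k := by exact_mod_cast hk
  have h := AntitoneOn.tsum_comp_add_le_integral (f := fun x : ℝ => x ^ (-(r + 1))) k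
    (fun x hx y _ hxy => rpow_le_rpow_of_nonpos (hk'.trans_le hx) hxy (by linarith))
    (integrableOn_Ioi_rpow_of_lt (by linarith) hk') (fun x hx => rpow_nonneg (hk'.trans hx).le _)
  rw [integral_Ioi_rpow_of_lt (by linarith) hk'] at h
  convert h using 1
  · push_cast; rfl
  · rw [show -(r + 1) + 1 = -r by ring]; ring

/-- The paper's `c_j`, extended to real `j`. -/
noncomputable def powLogDecay (A B x : ℝ) : ℝ := (x + 1) ^ (-(1 + B)) * log (x + 2) ^ (-A)

section

variable {q A B K u : ℝ}

lemma powLogDecay_add_rpow_le (hq : 0 ≤ q) (hA : 0 ≤ A) (hK : 0 ≤ K) (hu : 0 ≤ u) :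
    powLogDecay A B (u + K) ^ q ≤ (u + K + 1) ^ (-((1 + B) * q)) * log (K + 2) ^ (-(q * A)) := by
  have hlog : 0 < log (K + 2) := log_pos (by linarith)
  have hlog' : log (K + 2) ≤ log (u + K + 2) := log_le_log (by linarith) (by linarith)
  rw [powLogDecay, mul_rpow (by positivity) (rpow_nonneg (hlog.le.trans hlog') _),
    ← rpow_mul (by positivity), ← rpow_mul (hlog.le.trans hlog'), neg_mul, neg_mul, mul_comm A]
  exact mul_le_mul_of_nonneg_left
    (rpow_le_rpow_of_nonpos hlog hlog' (neg_nonpos.2 (by positivity))) (by positivity)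

lemma powLogDecay_add_rpow_mul_le_const_mul (hq : 0 ≤ q) (hA : 0 ≤ A) (hB : 0 ≤ B)
    (hK : 0 < K) (hu : 0 ≤ u) :
    powLogDecay A B (u + K) ^ q * (u + 1) ^ (q - 2) ≤
      K ^ (-((1 + B) * q)) * log (K + 2) ^ (-(q * A)) * (u + 1) ^ (q - 2) := by
  grw [powLogDecay_add_rpow_le hq hA hK.le hu]
  have hpow : (u + K + 1) ^ (-((1 + B) * q)) ≤ K ^ (-((1 + B) * q)) :=
    rpow_le_rpow_of_nonpos hK (by linarith) (neg_nonpos.2 (by positivity))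
  have hlog : 0 ≤ log (K + 2) ^ (-(q * A)) := rpow_nonneg (log_nonneg (by linarith)) _
  gcongr

lemma powLogDecay_add_rpow_mul_le_rpow (hq : 0 ≤ q) (hA : 0 ≤ A) (hB : 0 ≤ B) (hK : 0 ≤ K)
    (hu : 0 ≤ u) :
    powLogDecay A B (u + K) ^ q * (u + 1) ^ (q - 2) ≤
      log (K + 2) ^ (-(q * A)) * (u + 1) ^ (-(B * q + 2)) := by
  grw [powLogDecay_add_rpow_le hq hA hK hu,
    rpow_le_rpow_of_nonpos (by linarith) (by linarith : u + 1 ≤ u + K + 1) (by nlinarith)]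
  · refine le_of_eq ?_
    rw [mul_right_comm, mul_comm, ← rpow_add (by linarith)]
    ring_nf
  · exact rpow_nonneg (log_nonneg (by linarith)) _

lemma powLogDecay_nonneg {x : ℝ} (hx : 0 ≤ x) : 0 ≤ powLogDecay A B x :=
  mul_nonneg (rpow_nonneg (by linarith) _) (rpow_nonneg (log_nonneg (by linarith)) _)

lemma summable_nat_add_rpow {s : ℝ} (hs : s < -1) (k : ℕ) :
    Summable fun j : ℕ => ((j : ℝ) + k + 1) ^ s := by
  have h := (summable_nat_add_iff (k + 1)).mpr (summable_nat_rpow.mpr hs)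
  refine h.congr fun j => ?_
  push_cast; ring_nf

lemma summable_powLogDecay_rpow_mul (hq : 0 ≤ q) (hA : 0 ≤ A) (hB : 0 ≤ B) (hK : 0 ≤ K) :
    Summable fun j : ℕ => powLogDecay A B (j + K) ^ q * ((j : ℝ) + 1) ^ (q - 2) := by
  refine Summable.of_nonneg_of_le
    (fun j => mul_nonneg (rpow_nonneg (powLogDecay_nonneg (by positivity)) _) (by positivity))
    (fun j => powLogDecay_add_rpow_mul_le_rpow hq hA hB hK j.cast_nonneg) ?_
  refine Summable.mul_left _ ?_
  simpa using summable_nat_add_rpow (by nlinarith : -(B * q + 2) < -1) 0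

lemma sum_range_powLogDecay_rpow_mul_le (hq : 1 < q) (hA : 0 ≤ A) (hB : 0 ≤ B) {k : ℕ}
    (hk : 0 < k) :
    ∑ j ∈ Finset.range k, powLogDecay A B (j + k) ^ q * ((j : ℝ) + 1) ^ (q - 2) ≤
      2 ^ |q - 2| / (q - 1) * 2 ^ (q - 1) * (k : ℝ) ^ (-(B * q) - 1) *
        log (k + 2) ^ (-(q * A)) := by
  set K : ℝ := (k : ℝ)
  have hK : 1 ≤ K := by simp only [K]; exact_mod_cast hk
  have hL : 0 ≤ log (K + 2) ^ (-(q * A)) := rpow_nonneg (log_nonneg (by linarith)) _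
  have hsum := sum_range_add_one_rpow_le (by linarith : 0 < q - 1) k
  rw [show q - 1 - 1 = q - 2 by ring] at hsum
  have hdouble : (K + 1) ^ (q - 1) ≤ 2 ^ (q - 1) * K ^ (q - 1) := by
    rw [← mul_rpow zero_le_two (by linarith)]
    exact rpow_le_rpow (by linarith) (by linarith) (by linarith)
  calc ∑ j ∈ Finset.range k, powLogDecay A B (j + K) ^ q * ((j : ℝ) + 1) ^ (q - 2)
      ≤ ∑ j ∈ Finset.range k,
          K ^ (-((1 + B) * q)) * log (K + 2) ^ (-(q * A)) * ((j : ℝ) + 1) ^ (q - 2) :=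
        Finset.sum_le_sum fun j _ =>
          powLogDecay_add_rpow_mul_le_const_mul (by linarith) hA hB (by linarith) j.cast_nonneg
    _ = K ^ (-((1 + B) * q)) * log (K + 2) ^ (-(q * A)) *
          ∑ j ∈ Finset.range k, ((j : ℝ) + 1) ^ (q - 2) := by rw [Finset.mul_sum]
    _ ≤ K ^ (-((1 + B) * q)) * log (K + 2) ^ (-(q * A)) *
          (2 ^ |q - 2| / (q - 1) * (2 ^ (q - 1) * K ^ (q - 1))) := by
        gcongr
        exact hsum.trans (by gcongr)
    _ = 2 ^ |q - 2| / (q - 1) * 2 ^ (q - 1) * (K ^ (-((1 + B) * q)) * K ^ (q - 1)) *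
          log (K + 2) ^ (-(q * A)) := by ring
    _ = _ := by
        rw [← rpow_add (by linarith), show -((1 + B) * q) + (q - 1) = -(B * q) - 1 by ring]

lemma tsum_powLogDecay_rpow_mul_nat_add_le (hq : 0 ≤ q) (hA : 0 ≤ A) (hB : 0 ≤ B) {k : ℕ}
    (hk : 0 < k) :
    ∑' j : ℕ,
        powLogDecay A B (((j + k : ℕ) : ℝ) + k) ^ q * (((j + k : ℕ) : ℝ) + 1) ^ (q - 2) ≤
      1 / (B * q + 1) * (k : ℝ) ^ (-(B * q) - 1) * log (k + 2) ^ (-(q * A)) := by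
  have hBq : 0 ≤ B * q := mul_nonneg hB hq
  have hL : 0 ≤ log ((k : ℝ) + 2) ^ (-(q * A)) := rpow_nonneg (log_nonneg (by linarith)) _
  calc _ ≤ ∑' j : ℕ, log (k + 2) ^ (-(q * A)) * ((j : ℝ) + k + 1) ^ (-(B * q + 2)) :=
        Summable.tsum_le_tsum (fun j => by
            have h :=
              powLogDecay_add_rpow_mul_le_rpow hq hA hB k.cast_nonneg (j + k : ℕ).cast_nonneg
            push_cast at h ⊢
            exact h)
          ((summable_nat_add_iff k).mpr (summable_powLogDecay_rpow_mul hq hA hB k.cast_nonneg))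
          ((summable_nat_add_rpow (by linarith) k).mul_left _)
    _ = log ((k : ℝ) + 2) ^ (-(q * A)) * ∑' j : ℕ, ((j : ℝ) + k + 1) ^ (-(B * q + 2)) :=
        tsum_mul_left
    _ ≤ log ((k : ℝ) + 2) ^ (-(q * A)) * ((k : ℝ) ^ (-(B * q + 1)) / (B * q + 1)) := by
        have h := tsum_nat_add_rpow_le (r := B * q + 1) (by linarith) hk
        rw [show B * q + 1 + 1 = B * q + 2 by ring] at h
        gcongr
    _ = _ := by rw [neg_add']; ring

theorem tsum_powLogDecay_rpow_mul_le (hq : 1 < q) (hA : 0 ≤ A) (hB : 0 ≤ B) {k : ℕ}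
    (hk : 0 < k) :
    Summable (fun j : ℕ => powLogDecay A B (j + k) ^ q * ((j : ℝ) + 1) ^ (q - 2)) ∧
      ∑' j : ℕ, powLogDecay A B (j + k) ^ q * ((j : ℝ) + 1) ^ (q - 2) ≤
        (2 ^ |q - 2| / (q - 1) * 2 ^ (q - 1) + 1 / (B * q + 1)) * (k : ℝ) ^ (-(B * q) - 1) *
          log (k + 2) ^ (-(q * A)) := by
  have hs := summable_powLogDecay_rpow_mul (by linarith : 0 ≤ q) hA hB k.cast_nonneg
  refine ⟨hs, ?_⟩
  rw [← hs.sum_add_tsum_nat_add k, add_mul, add_mul]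
  exact add_le_add (sum_range_powLogDecay_rpow_mul_le hq hA hB hk)
    (tsum_powLogDecay_rpow_mul_nat_add_le (by linarith : 0 ≤ q) hA hB hk)

end

/-- tail estimate Σ_{j≥k} c_j^q (j-k+1)^{q-2} ≤ C k^{-Bq-1} log(k+2)^{-qA}
for c_j = (j+1)^{-(1+B)} log(j+2)^{-A}, B = (1/q)/(β-1/q'), A = β/(β-1/q'). -/
theorem stmt14 (q q' β A B : ℝ) (hq : 1 < q) (hconj : 1/q + 1/q' = 1) (hβ : 1/q' < β)
    (hA : A = β / (β - 1/q')) (hB : B = (1/q) / (β - 1/q')) :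
    ∃ C : ℝ, ∀ k : ℕ, 1 ≤ k →
      (Summable fun j : ℕ =>
        ((((j : ℝ) + k + 1) ^ (-(1 + B)) * (Real.log ((j : ℝ) + k + 2)) ^ (-A)) ^ q) *
          ((j : ℝ) + 1) ^ (q - 2)) ∧
      ∑' j : ℕ, ((((j : ℝ) + k + 1) ^ (-(1 + B)) * (Real.log ((j : ℝ) + k + 2)) ^ (-A)) ^ q) *
          ((j : ℝ) + 1) ^ (q - 2) ≤
        C * (k : ℝ) ^ (-(B * q) - 1) * (Real.log ((k : ℝ) + 2)) ^ (-(q * A)) := by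
  have hq' : 0 < 1 / q' := by
    have : 1 / q < 1 := (div_lt_one (by linarith)).2 hq
    linarith
  have hd : 0 < β - 1 / q' := by linarith
  have hA0 : 0 ≤ A := hA ▸ div_nonneg (by linarith) hd.le
  have hB0 : 0 ≤ B := hB ▸ div_nonneg (by positivity) hd.le
  exact ⟨_, fun k hk => tsum_powLogDecay_rpow_mul_le hq hA0 hB0 hk⟩
end

section
/- Let p = q = 1, α, β > 0 with αβ = 1. Then there is a constant C such that for every f : ℝ → ℂ with ‖f(x)(1+|x|)^α‖_{L¹} + ‖f̂(ξ)|ξ|^β‖_{L¹} < ∞, one has Σ_{n∈ℤ} |f(n)| ≤ C(‖f(x)(1+|x|)^α‖_{L¹} + ‖f̂(ξ)|ξ|^β‖_{L¹}). -/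
/-!
For a cutoff `Φ` equal to `1` on `[-1, 1]` and a scale `Δ > 0`, Fourier inversion and the
multiplication formula split `f a` as
`∫ e(aξ) 𝓕f(ξ) (1 - Φ(ξ/Δ)) dξ + ∫ f(x) Δ 𝓕Φ(Δ(x - a)) dx`.
Take `a = n` and `Δₙ = (1 + |n|)^α`. The first term only sees `|ξ| > Δₙ`, and because `αβ = 1`
a given `ξ` exceeds at most `2|ξ|^β` of the `Δₙ`. In the second, `𝓕Φ` decays like `(1 + |y|)⁻²`,
so `∑ₙ Δₙ |𝓕Φ(Δₙ(x - n))| ≲ (1 + |x|)^α`: the at most two `n` with `|x - n| < 1` contribute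
`Δₙ ≲ (1 + |x|)^α`, and the remaining terms are bounded by a shifted convergent lattice sum.
-/

open MeasureTheory Real Filter FourierTransform Topology
open scoped ENNReal NNReal

open Finset
open scoped SchwartzMap

lemma norm_mul_ofReal_of_nonneg (z : ℂ) {r : ℝ} (hr : 0 ≤ r) : ‖z * (r : ℂ)‖ = ‖z‖ * r := by
  rw [norm_mul, Complex.norm_real, Real.norm_of_nonneg hr]

section Weighted

variable {X : Type*} [MeasurableSpace X] {μ : Measure X} {g : X → ℂ} {ρ : X → ℝ}

lemma MeasureTheory.Integrable.of_mul_ofReal_of_one_le (h : Integrable (fun x => g x * (ρ x : ℂ)) μ)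
    (hg : AEStronglyMeasurable g μ) (hρ : ∀ x, 1 ≤ ρ x) : Integrable g μ :=
  h.norm.mono' hg <| ae_of_all _ fun x => by
    rw [norm_mul_ofReal_of_nonneg _ (zero_le_one.trans (hρ x))]
    exact le_mul_of_one_le_right (norm_nonneg _) (hρ x)

lemma sum_integral_norm_mul_le {ι : Type*} (hg : AEStronglyMeasurable g μ)
    (hρ : Integrable (fun x => g x * (ρ x : ℂ)) μ) (hρ0 : ∀ x, 0 ≤ ρ x) (s : Finset ι)
    {w : ι → X → ℝ} (hw : ∀ i ∈ s, AEStronglyMeasurable (w i) μ)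
    (hw0 : ∀ i ∈ s, ∀ x, 0 ≤ w i x) {C : ℝ} (hle : ∀ x, ∑ i ∈ s, w i x ≤ C * ρ x) :
    ∑ i ∈ s, ∫ x, ‖g x‖ * w i x ∂μ ≤ C * ∫ x, ‖g x * (ρ x : ℂ)‖ ∂μ := by
  have hbound : ∀ x, ‖g x‖ * ∑ i ∈ s, w i x ≤ C * ‖g x * (ρ x : ℂ)‖ := fun x => by
    rw [norm_mul_ofReal_of_nonneg _ (hρ0 x), mul_left_comm]
    exact mul_le_mul_of_nonneg_left (hle x) (norm_nonneg _)
  have hint : ∀ i ∈ s, Integrable (fun x => ‖g x‖ * w i x) μ := fun i hi =>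
    (hρ.norm.const_mul C).mono' (hg.norm.mul (hw i hi)) <| ae_of_all _ fun x => by
      rw [Real.norm_of_nonneg (mul_nonneg (norm_nonneg _) (hw0 i hi x))]
      exact (mul_le_mul_of_nonneg_left (single_le_sum (fun j hj => hw0 j hj x) hi)
        (norm_nonneg _)).trans (hbound x)
  rw [← integral_finsetSum _ hint, ← integral_const_mul]
  exact integral_mono (integrable_finsetSum _ hint) (hρ.norm.const_mul C) fun x => by
    simpa only [← mul_sum] using hbound x

end Weighted

lemma MeasureTheory.Integrable.of_mul_abs_rpow_of_norm_le {F : ℝ → ℂ} {β C : ℝ}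
    (h : Integrable fun ξ => F ξ * ((|ξ| ^ β : ℝ) : ℂ)) (hβ : 0 ≤ β)
    (hF : AEStronglyMeasurable F) (hC : ∀ ξ, ‖F ξ‖ ≤ C) : Integrable F := by
  refine (h.norm.add ((integrable_indicator_iff (measurableSet_Icc (a := (-1 : ℝ)) (b := 1))).2
    (integrableOn_const (C := C) measure_Icc_lt_top.ne))).mono' hF (ae_of_all _ fun ξ => ?_)
  rw [Pi.add_apply]
  by_cases hξ : |ξ| ≤ 1
  · rw [Set.indicator_of_mem (show ξ ∈ Set.Icc (-1 : ℝ) 1 from abs_le.1 hξ)]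
    exact (hC ξ).trans (le_add_of_nonneg_left (norm_nonneg _))
  · rw [Set.indicator_of_notMem (show ξ ∉ Set.Icc (-1 : ℝ) 1 from fun h => hξ (abs_le.2 h)),
      add_zero, norm_mul_ofReal_of_nonneg _ (by positivity)]
    exact le_mul_of_one_le_right (norm_nonneg _) (one_le_rpow (not_le.1 hξ).le hβ)

lemma fourier_modulate_dilate (φ : ℝ → ℂ) {Δ : ℝ} (hΔ : 0 < Δ) (a x : ℝ) :
    𝓕 (fun ξ => 𝐞 (a * ξ) • φ (Δ⁻¹ * ξ)) x = Δ • 𝓕 φ (Δ * (x - a)) := by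
  have h := Measure.integral_comp_mul_left (fun ξ => 𝐞 (-(ξ * (x - a))) • φ (Δ⁻¹ * ξ)) Δ
  simp only [inv_mul_cancel_left₀ hΔ.ne', abs_of_pos (inv_pos.2 hΔ)] at h
  rw [Real.fourier_real_eq, Real.fourier_real_eq]
  calc ∫ v, 𝐞 (-(v * x)) • 𝐞 (a * v) • φ (Δ⁻¹ * v)
      = ∫ v, 𝐞 (-(v * (x - a))) • φ (Δ⁻¹ * v) := by
        congr 1 with v
        rw [smul_smul, ← AddChar.map_add_eq_mul]
        ring_nf
    _ = Δ • ∫ v, 𝐞 (-(Δ * v * (x - a))) • φ v := by rw [h, smul_inv_smul₀ hΔ.ne']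
    _ = Δ • ∫ v, 𝐞 (-(v * (Δ * (x - a)))) • φ v := by simp_rw [mul_left_comm _ Δ, mul_assoc]

lemma MeasureTheory.Integrable.fourierChar_mul_smul {h : ℝ → ℂ} (hh : Integrable h) (a : ℝ) :
    Integrable fun ξ => 𝐞 (a * ξ) • h ξ := by
  simpa [mul_comm] using (Real.fourierIntegral_convergent_iff (-a)).2 hh

lemma norm_fourier_le_integral_norm (f : ℝ → ℂ) (a : ℝ) :
    ‖𝓕 f a‖ ≤ ∫ x, ‖f x‖ :=
  VectorFourier.norm_fourierIntegral_le_integral_norm _ _ _ _ _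

lemma continuous_fourier_of_integrable {f : ℝ → ℂ} (hf : Integrable f) : Continuous (𝓕 f) :=
  VectorFourier.fourierIntegral_continuous Real.continuous_fourierChar continuous_inner hf

lemma norm_apply_le_integral_cutoff_add_integral_kernel {f : ℝ → ℂ} (hf : Continuous f)
    (hfi : Integrable f) (hFf : Integrable (𝓕 f)) {φ : ℝ → ℂ} (hφ : Integrable φ)
    {Δ : ℝ} (hΔ : 0 < Δ) (a : ℝ) :
    ‖f a‖ ≤ (∫ ξ, ‖𝓕 f ξ‖ * ‖1 - φ (Δ⁻¹ * ξ)‖) + ∫ x, ‖f x‖ * (Δ * ‖𝓕 φ (Δ * (x - a))‖) := by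
  set g : ℝ → ℂ := fun ξ => 𝐞 (a * ξ) • φ (Δ⁻¹ * ξ)
  have hg : Integrable g := (hφ.comp_mul_left' (inv_ne_zero hΔ.ne')).fourierChar_mul_smul a
  have hinv : f a = ∫ ξ, 𝐞 (a * ξ) • 𝓕 f ξ := by
    conv_lhs => rw [← hf.fourierInv_fourier_eq hfi hFf, Real.fourierInv_eq]
    simp_rw [real_inner_comm, RCLike.inner_apply, conj_trivial, mul_comm _ a]
  have hmult : ∫ ξ, 𝓕 f ξ * g ξ = ∫ x, f x * 𝓕 g x := by
    have h := VectorFourier.integral_fourierIntegral_smul_eq_flip (L := innerₗ ℝ)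
      Real.continuous_fourierChar continuous_inner hfi hg
    simp only [smul_eq_mul, flip_innerₗ] at h
    exact h
  have hsplit : f a = (∫ ξ, 𝐞 (a * ξ) • (𝓕 f ξ * (1 - φ (Δ⁻¹ * ξ)))) + ∫ ξ, 𝓕 f ξ * g ξ := by
    have hFg : Integrable fun ξ => 𝓕 f ξ * g ξ :=
      hg.bdd_mul hFf.aestronglyMeasurable (ae_of_all _ (norm_fourier_le_integral_norm f))
    have hcut : ∀ ξ, 𝐞 (a * ξ) • (𝓕 f ξ * (1 - φ (Δ⁻¹ * ξ))) =
        𝐞 (a * ξ) • 𝓕 f ξ - 𝓕 f ξ * g ξ := fun ξ => by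
      simp only [g, Circle.smul_def, smul_eq_mul]
      ring
    simp_rw [hcut]
    rw [integral_sub (hFf.fourierChar_mul_smul a) hFg, sub_add_cancel, hinv]
  rw [hsplit, hmult]
  refine (norm_add_le _ _).trans (add_le_add ?_ ?_)
  · refine (norm_integral_le_integral_norm _).trans_eq (integral_congr_ae (ae_of_all _ fun ξ => ?_))
    simp only [Circle.norm_smul, norm_mul]
  · refine (norm_integral_le_integral_norm _).trans_eq (integral_congr_ae (ae_of_all _ fun x => ?_))
    simp only [g, fourier_modulate_dilate φ hΔ, norm_mul, norm_smul, Real.norm_of_nonneg hΔ.le]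

lemma card_filter_one_add_abs_rpow_lt_le {α β : ℝ} (hβ : 0 < β) (hαβ : α * β = 1)
    (s : Finset ℤ) {t : ℝ} (ht : 0 ≤ t) :
    (#(s.filter fun n : ℤ => (1 + |(n : ℝ)|) ^ α < t) : ℝ) ≤ 2 * t ^ β := by
  set m : ℤ := ⌈t ^ β⌉ - 1
  have hm : (m : ℝ) < t ^ β := by
    simp only [m, Int.cast_sub, Int.cast_one]
    linarith [Int.ceil_lt_add_one (t ^ β)]
  have hsub : (s.filter fun n : ℤ => (1 + |(n : ℝ)|) ^ α < t) ⊆ Ioo (-m) m := by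
    intro n hn
    have h := Real.rpow_lt_rpow (by positivity) (mem_filter.1 hn).2 hβ
    rw [← Real.rpow_mul (by positivity), hαβ, Real.rpow_one] at h
    have hn : |(n : ℝ)| < m := by
      simp only [m, Int.cast_sub, Int.cast_one]
      linarith [Int.le_ceil (t ^ β)]
    rw [abs_lt] at hn
    exact mem_Ioo.2 ⟨by exact_mod_cast hn.1, by exact_mod_cast hn.2⟩
  calc (#(s.filter fun n : ℤ => (1 + |(n : ℝ)|) ^ α < t) : ℝ) ≤ #(Ioo (-m) m) := by
        exact_mod_cast card_le_card hsub
    _ = ((max (m - -m - 1) 0 : ℤ) : ℝ) := by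
        rw [Int.card_Ioo, ← Int.toNat_eq_max, Int.cast_natCast]
    _ ≤ 2 * t ^ β := by
        push_cast
        exact max_le (by linarith) (by positivity)

lemma card_filter_abs_sub_lt_one_le_two (s : Finset ℤ) (x : ℝ) :
    #(s.filter fun n : ℤ => |x - n| < 1) ≤ 2 := by
  refine (card_le_card fun n hn => ?_).trans (card_le_two (a := ⌊x⌋) (b := ⌊x⌋ + 1))
  have h := abs_sub_lt_iff.1 (mem_filter.1 hn).2
  have h₁ : ⌊x⌋ - 1 < n := by
    rw [← Int.cast_lt (R := ℝ)]; push_cast; linarith [Int.floor_le x]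
  have h₂ : n < ⌊x⌋ + 2 := by
    rw [← Int.cast_lt (R := ℝ)]; push_cast; linarith [Int.lt_floor_add_one x]
  simp only [mem_insert, mem_singleton]
  omega

lemma summable_inv_one_add_abs_sq : Summable fun k : ℤ => ((1 + |(k : ℝ)|) ^ 2)⁻¹ := by
  have h : Summable fun n : ℕ => ((1 + (n : ℝ)) ^ 2)⁻¹ := by
    simpa [add_comm] using (summable_nat_add_iff 1).2 (Real.summable_nat_pow_inv.2 one_lt_two)
  exact .of_nat_of_neg (by simpa using h) (by simpa using h)

lemma sum_inv_one_add_abs_sub_sq_le (s : Finset ℤ) (x : ℝ) :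
    ∑ n ∈ s, ((1 + |x - n|) ^ 2)⁻¹ ≤ 4 * ∑' k : ℤ, ((1 + |(k : ℝ)|) ^ 2)⁻¹ := by
  set g : ℤ → ℝ := fun k => ((1 + |(k : ℝ)|) ^ 2)⁻¹
  have hshift : Summable fun n => g (Equiv.subRight ⌊x⌋ n) :=
    (Equiv.subRight ⌊x⌋).summable_iff.2 summable_inv_one_add_abs_sq
  calc ∑ n ∈ s, ((1 + |x - n|) ^ 2)⁻¹ ≤ ∑ n ∈ s, 4 * g (Equiv.subRight ⌊x⌋ n) :=
        sum_le_sum fun n _ => ?_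
    _ ≤ 4 * ∑' n, g (Equiv.subRight ⌊x⌋ n) := by
        rw [← mul_sum]
        gcongr
        exact hshift.sum_le_tsum _ fun _ _ => by positivity
    _ = 4 * ∑' k, g k := by rw [Equiv.tsum_eq]
  have hk : 1 + |((n - ⌊x⌋ : ℤ) : ℝ)| ≤ 2 * (1 + |x - n|) := by
    have := abs_sub_le (n : ℝ) x ⌊x⌋
    rw [abs_sub_comm (n : ℝ) x, abs_of_nonneg (sub_nonneg.2 (Int.floor_le x))] at this
    push_cast
    linarith [Int.lt_floor_add_one x, abs_nonneg (x - n)]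
  simp only [g, Equiv.subRight_apply]
  rw [← div_eq_mul_inv, le_div_iff₀ (by positivity), ← div_eq_inv_mul,
    div_le_iff₀ (by positivity)]
  nlinarith [abs_nonneg ((n - ⌊x⌋ : ℤ) : ℝ)]

lemma mul_norm_comp_mul_le {K : ℝ → ℂ} {M : ℝ} (hK : ∀ y, (1 + |y|) ^ 2 * ‖K y‖ ≤ M)
    {Δ : ℝ} (hΔ : 1 ≤ Δ) (y : ℝ) :
    Δ * ‖K (Δ * y)‖ ≤ M * ((if |y| < 1 then Δ else 0) + 4 * ((1 + |y|) ^ 2)⁻¹) := by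
  have hKy := hK (Δ * y)
  rw [abs_mul, abs_of_pos (by linarith)] at hKy
  have hM : 0 ≤ M := (by positivity : (0 : ℝ) ≤ _).trans hKy
  have h4 : 0 ≤ M * (4 * ((1 + |y|) ^ 2)⁻¹) := by positivity
  split_ifs with hy
  · have : ‖K (Δ * y)‖ ≤ M :=
      (le_mul_of_one_le_left (norm_nonneg _) (one_le_pow₀ (by nlinarith [abs_nonneg y]))).trans hKy
    nlinarith
  · have hΔy : Δ * (1 + |y|) ^ 2 ≤ 4 * (1 + Δ * |y|) ^ 2 := by
      nlinarith [mul_le_mul_of_nonneg_left (not_lt.1 hy) (by linarith : (0 : ℝ) ≤ Δ)]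
    rw [zero_add, ← mul_assoc, ← div_eq_mul_inv, le_div_iff₀ (by positivity)]
    nlinarith [norm_nonneg (K (Δ * y))]

lemma exists_sum_mul_norm_comp_mul_sub_le {K : ℝ → ℂ} {M : ℝ}
    (hK : ∀ y, (1 + |y|) ^ 2 * ‖K y‖ ≤ M) {α : ℝ} (hα : 0 ≤ α) :
    ∃ C, 0 ≤ C ∧ ∀ (s : Finset ℤ) (x : ℝ),
      ∑ n ∈ s, (1 + |(n : ℝ)|) ^ α * ‖K ((1 + |(n : ℝ)|) ^ α * (x - n))‖ ≤ C * (1 + |x|) ^ α := by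
  set S := ∑' k : ℤ, ((1 + |(k : ℝ)|) ^ 2)⁻¹
  have hM : 0 ≤ M := (by positivity : (0 : ℝ) ≤ _).trans (hK 0)
  have hS : 0 ≤ S := tsum_nonneg fun _ => by positivity
  refine ⟨M * (2 * 2 ^ α + 16 * S), by positivity, fun s x => ?_⟩
  have hx : 1 ≤ (1 + |x|) ^ α := one_le_rpow (by linarith [abs_nonneg x]) hα
  have hnear : ∑ n ∈ s, (if |x - n| < 1 then (1 + |(n : ℝ)|) ^ α else 0) ≤
      2 * (2 ^ α * (1 + |x|) ^ α) := by
    rw [← sum_filter]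
    refine (sum_le_card_nsmul _ _ (2 ^ α * (1 + |x|) ^ α) fun n hn => ?_).trans ?_
    · rw [← mul_rpow zero_le_two (by positivity)]
      have hnx : |(n : ℝ)| - |x| < 1 :=
        (abs_sub_abs_le_abs_sub _ _).trans_lt (abs_sub_comm (n : ℝ) x ▸ (mem_filter.1 hn).2)
      exact rpow_le_rpow (by positivity) (by linarith [abs_nonneg x]) hα
    · rw [nsmul_eq_mul]
      gcongr
      exact_mod_cast card_filter_abs_sub_lt_one_le_two s x
  calc ∑ n ∈ s, (1 + |(n : ℝ)|) ^ α * ‖K ((1 + |(n : ℝ)|) ^ α * (x - n))‖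
      ≤ ∑ n ∈ s, M * ((if |x - n| < 1 then (1 + |(n : ℝ)|) ^ α else 0) +
          4 * ((1 + |x - n|) ^ 2)⁻¹) :=
        sum_le_sum fun n _ =>
          mul_norm_comp_mul_le hK (one_le_rpow (by linarith [abs_nonneg (n : ℝ)]) hα) _
    _ = M * (∑ n ∈ s, (if |x - n| < 1 then (1 + |(n : ℝ)|) ^ α else 0) +
          4 * ∑ n ∈ s, ((1 + |x - n|) ^ 2)⁻¹) := by
        rw [← mul_sum, sum_add_distrib, mul_sum]
    _ ≤ M * (2 * (2 ^ α * (1 + |x|) ^ α) + 4 * (4 * S)) := by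
        gcongr
        exact sum_inv_one_add_abs_sub_sq_le s x
    _ ≤ M * (2 * 2 ^ α + 16 * S) * (1 + |x|) ^ α := by
        rw [mul_assoc]
        gcongr
        nlinarith

noncomputable def plateauBump : ContDiffBump (0 : ℝ) := ⟨1, 2, one_pos, one_lt_two⟩

noncomputable def plateau : 𝓢(ℝ, ℂ) :=
  HasCompactSupport.toSchwartzMap (f := fun ξ : ℝ => (plateauBump ξ : ℂ))
    (plateauBump.hasCompactSupport.comp_left Complex.ofReal_zero)
    (Complex.ofRealCLM.contDiff.comp plateauBump.contDiff)

lemma plateau_apply (ξ : ℝ) : plateau ξ = (plateauBump ξ : ℂ) := rfl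

lemma plateau_eq_one {ξ : ℝ} (hξ : |ξ| ≤ 1) : plateau ξ = 1 := by
  have : plateauBump ξ = 1 :=
    plateauBump.one_of_mem_closedBall (by simpa [plateauBump, Real.dist_eq] using hξ)
  rw [plateau_apply, this, Complex.ofReal_one]

lemma norm_one_sub_plateau_le (ξ : ℝ) : ‖1 - plateau ξ‖ ≤ 1 := by
  have h : (1 : ℂ) - plateau ξ = ((1 - plateauBump ξ : ℝ) : ℂ) := by
    rw [plateau_apply, Complex.ofReal_sub, Complex.ofReal_one]
  rw [h, Complex.norm_real, Real.norm_eq_abs, abs_le]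
  constructor <;> linarith [plateauBump.nonneg (x := ξ), plateauBump.le_one (x := ξ)]

lemma norm_one_sub_plateau_inv_mul_le {Δ : ℝ} (hΔ : 0 < Δ) (ξ : ℝ) :
    ‖1 - plateau (Δ⁻¹ * ξ)‖ ≤ if Δ < |ξ| then 1 else 0 := by
  split_ifs with h
  · exact norm_one_sub_plateau_le _
  · rw [plateau_eq_one, sub_self, norm_zero]
    rw [abs_mul, abs_inv, abs_of_pos hΔ, inv_mul_le_one₀ hΔ]
    exact not_lt.1 h

lemma SchwartzMap.exists_one_add_abs_sq_mul_norm_le (φ : 𝓢(ℝ, ℂ)) :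
    ∃ M, ∀ y : ℝ, (1 + |y|) ^ 2 * ‖φ y‖ ≤ M :=
  ⟨_, fun y => by
    simpa using φ.one_add_le_sup_seminorm_apply (𝕜 := ℝ) (m := (2, 0)) le_rfl le_rfl y⟩

lemma sum_norm_one_sub_plateau_le {α β : ℝ} (hβ : 0 < β) (hαβ : α * β = 1) (s : Finset ℤ)
    (ξ : ℝ) : ∑ n ∈ s, ‖1 - plateau (((1 + |(n : ℝ)|) ^ α)⁻¹ * ξ)‖ ≤ 2 * |ξ| ^ β :=
  calc ∑ n ∈ s, ‖1 - plateau (((1 + |(n : ℝ)|) ^ α)⁻¹ * ξ)‖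
      ≤ ∑ n ∈ s, if (1 + |(n : ℝ)|) ^ α < |ξ| then (1 : ℝ) else 0 :=
        sum_le_sum fun n _ => norm_one_sub_plateau_inv_mul_le (by positivity) ξ
    _ = #(s.filter fun n : ℤ => (1 + |(n : ℝ)|) ^ α < |ξ|) := sum_boole _ _
    _ ≤ 2 * |ξ| ^ β := card_filter_one_add_abs_rpow_lt_le hβ hαβ s (abs_nonneg ξ)

lemma sum_norm_apply_int_le {α β C : ℝ} (hβ : 0 < β) (hαβ : α * β = 1)
    (hkernel : ∀ (s : Finset ℤ) (x : ℝ), ∑ n ∈ s,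
      (1 + |(n : ℝ)|) ^ α * ‖𝓕 (plateau : ℝ → ℂ) ((1 + |(n : ℝ)|) ^ α * (x - n))‖ ≤
        C * (1 + |x|) ^ α)
    {f : ℝ → ℂ} (hf : Continuous f) (hfi : Integrable f) (hFf : Integrable (𝓕 f))
    (hwf : Integrable fun x : ℝ => f x * (((1 + |x|) ^ α : ℝ) : ℂ))
    (hwFf : Integrable fun ξ : ℝ => 𝓕 f ξ * ((|ξ| ^ β : ℝ) : ℂ)) (s : Finset ℤ) :
    ∑ n ∈ s, ‖f n‖ ≤ 2 * (∫ ξ : ℝ, ‖𝓕 f ξ * ((|ξ| ^ β : ℝ) : ℂ)‖) +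
      C * ∫ x : ℝ, ‖f x * (((1 + |x|) ^ α : ℝ) : ℂ)‖ := by
  have hK : Continuous (𝓕 (plateau : ℝ → ℂ)) := continuous_fourier_of_integrable plateau.integrable
  have hFc : Continuous (𝓕 f) := continuous_fourier_of_integrable hfi
  refine (sum_le_sum fun (n : ℤ) _ => norm_apply_le_integral_cutoff_add_integral_kernel hf hfi hFf
    plateau.integrable (by positivity : 0 < (1 + |(n : ℝ)|) ^ α) n).trans ?_
  rw [sum_add_distrib]
  gcongr
  · exact sum_integral_norm_mul_le hFc.aestronglyMeasurable hwFf (fun ξ => by positivity) s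
      (fun n _ => (by fun_prop : Continuous _).aestronglyMeasurable) (fun _ _ _ => norm_nonneg _)
      (sum_norm_one_sub_plateau_le hβ hαβ s)
  · exact sum_integral_norm_mul_le hf.aestronglyMeasurable hwf (fun x => by positivity) s
      (fun n _ => (by fun_prop : Continuous _).aestronglyMeasurable) (fun _ _ _ => by positivity)
      (hkernel s)

/-- endpoint absolute convergence case p = q = 1, αβ = 1:
Σ_{n∈ℤ} |f(n)| ≤ C (‖f(x)(1+|x|)^α‖₁ + ‖𝓕f(ξ)|ξ|^β‖₁). -/
theorem stmt16 (α β : ℝ) (hα : 0 < α) (hβ : 0 < β) (hαβ : α * β = 1) :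
    ∃ C : ℝ, 0 < C ∧ ∀ f : ℝ → ℂ, Continuous f →
      Integrable (fun x : ℝ => f x * (((1 + |x|) ^ α : ℝ) : ℂ)) →
      Integrable (fun ξ : ℝ => 𝓕 f ξ * ((|ξ| ^ β : ℝ) : ℂ)) →
      (Summable fun n : ℤ => ‖f n‖) ∧
      ∑' n : ℤ, ‖f n‖ ≤
        C * ((∫ x : ℝ, ‖f x * (((1 + |x|) ^ α : ℝ) : ℂ)‖)
          + ∫ ξ : ℝ, ‖𝓕 f ξ * ((|ξ| ^ β : ℝ) : ℂ)‖) := by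
  obtain ⟨M, hM⟩ := (𝓕 plateau).exists_one_add_abs_sq_mul_norm_le
  rw [SchwartzMap.fourier_coe] at hM
  obtain ⟨C, hC, hkernel⟩ := exists_sum_mul_norm_comp_mul_sub_le hM hα.le
  refine ⟨2 + C, by positivity, fun f hf hwf hwFf => ?_⟩
  have hfi : Integrable f := hwf.of_mul_ofReal_of_one_le hf.aestronglyMeasurable fun x =>
    one_le_rpow (by linarith [abs_nonneg x]) hα.le
  have hFf : Integrable (𝓕 f) := hwFf.of_mul_abs_rpow_of_norm_le hβ.le
    (continuous_fourier_of_integrable hfi).aestronglyMeasurable (norm_fourier_le_integral_norm f)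
  have hA : 0 ≤ ∫ x : ℝ, ‖f x * (((1 + |x|) ^ α : ℝ) : ℂ)‖ := integral_nonneg fun _ => norm_nonneg _
  have hB : 0 ≤ ∫ ξ : ℝ, ‖𝓕 f ξ * ((|ξ| ^ β : ℝ) : ℂ)‖ := integral_nonneg fun _ => norm_nonneg _
  have hsum : ∀ s : Finset ℤ, ∑ n ∈ s, ‖f n‖ ≤
      (2 + C) * ((∫ x : ℝ, ‖f x * (((1 + |x|) ^ α : ℝ) : ℂ)‖)
        + ∫ ξ : ℝ, ‖𝓕 f ξ * ((|ξ| ^ β : ℝ) : ℂ)‖) := fun s =>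
    (sum_norm_apply_int_le hβ hαβ hkernel hf hfi hFf hwf hwFf s).trans (by nlinarith)
  have hsummable := summable_of_sum_le (fun n : ℤ => norm_nonneg (f n)) hsum
  exact ⟨hsummable, hsummable.tsum_le_of_sum_le hsum⟩
end
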